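/- arXiv:2107.05391 — 7 statements merged into one kernel-verified Lean document; each statement's English description precedes it below -/
import Mathlib

section
/- For all Y, Z ∈ V one has Ŝ(Y,Z) = (ρ/α)·g(Y,Z) − (ρ/α)·π(Y)π(Z) + (1/α)·η(Y)η(Z). -/
open scoped RealInnerProductSpace

theorem statement0_general {V : Type*} [NormedAddCommGroup V] [InnerProductSpace ℝ V]
    (S : V →ₗ[ℝ] V →ₗ[ℝ] ℝ) (hSsymm : ∀ X Y : V, S X Y = S Y X)
    (P : V) (hP : ⟪P, P⟫ = 1) (hα : S P P ≠ 0) (ρ : ℝ)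
    (hρ : ∀ X Y Z W : V,
      S Y Z * S X W - S X Z * S Y W =
        ρ * (⟪Y, Z⟫ * ⟪X, W⟫ - ⟪X, Z⟫ * ⟪Y, W⟫)) :
    ∀ Y Z : V, S Y Z =
      (ρ / S P P) * ⟪Y, Z⟫ - (ρ / S P P) * (⟪Y, P⟫ * ⟪Z, P⟫)
        + (1 / S P P) * (S P Y * S P Z) := by
  intro Y Z
  have hSP : S Y Z * S P P = ρ * (⟪Y, Z⟫ - ⟪Y, P⟫ * ⟪Z, P⟫) + S P Y * S P Z := by
    have h := hρ P Y Z P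
    rw [hP, real_inner_comm Z P, hSsymm Y P] at h
    linarith
  field_simp
  linarith

/-- Let `(V, ⟪·,·⟫)` be a real inner product space of finite dimension `n ≥ 3`.
Let `Ŝ = S` be a symmetric bilinear form, `P ∈ V` a unit vector, `π(X) = ⟪X,P⟫`,
`α = Ŝ(P,P) ≠ 0`, `η(Z) = Ŝ(P,Z)`, and suppose
`Ŝ(Y,Z)Ŝ(X,W) − Ŝ(X,Z)Ŝ(Y,W) = ρ(g(Y,Z)g(X,W) − g(X,Z)g(Y,W))` for all `X,Y,Z,W`.
Then `Ŝ(Y,Z) = (ρ/α)g(Y,Z) − (ρ/α)π(Y)π(Z) + (1/α)η(Y)η(Z)` for all `Y,Z`. -/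
theorem statement0 {V : Type*} [NormedAddCommGroup V] [InnerProductSpace ℝ V]
    [FiniteDimensional ℝ V] (h3 : 3 ≤ Module.finrank ℝ V)
    (S : V →ₗ[ℝ] V →ₗ[ℝ] ℝ) (hSsymm : ∀ X Y : V, S X Y = S Y X)
    (P : V) (hP : ⟪P, P⟫ = 1) (hα : S P P ≠ 0) (ρ : ℝ)
    (hρ : ∀ X Y Z W : V,
      S Y Z * S X W - S X Z * S Y W =
        ρ * (⟪Y, Z⟫ * ⟪X, W⟫ - ⟪X, Z⟫ * ⟪Y, W⟫)) :
    ∀ Y Z : V, S Y Z =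
      (ρ / S P P) * ⟪Y, Z⟫ - (ρ / S P P) * (⟪Y, P⟫ * ⟪Z, P⟫)
        + (1 / S P P) * (S P Y * S P Z) :=
  statement0_general S hSsymm P hP hα ρ hρ
end

section
/- There exist real numbers a, b and a nonzero linear functional η₀ on V such that Ŝ(Y,Z) = a·g(Y,Z) + b·η₀(Y)η₀(Z) for all Y, Z ∈ V; that is, Ŝ has quasi-Einstein form. -/
open scoped RealInnerProductSpace

/-!
Put `α = Ŝ(P,P)` and `η = Ŝ(P,·)`. The Gauss-type identity with `X = W = P` gives
`α Ŝ(Y,Z) = η(Y) η(Z) + ρ (g(Y,Z) - π(Y) π(Z))`, so it suffices to express `ρ π` through `η`.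
For `Q ⟂ P`, choose `R ≠ 0` orthogonal to both (this is where `n ≥ 3` enters); three instances
of the identity on `P, Q, R` combine to `ρ η(Q) |R|² = 0`. Hence `ρ η = ρ α π`, and
`Ŝ = (ρ/α) g + (1/α - ρ/α³) η ⊗ η`.
-/

section

variable {V : Type*} [NormedAddCommGroup V] [InnerProductSpace ℝ V]

theorem exists_ne_zero_inner_eq_zero_of_two_lt_finrank [FiniteDimensional ℝ V]
    (h : 2 < Module.finrank ℝ V) (P Q : V) : ∃ R ≠ 0, ⟪P, R⟫ = 0 ∧ ⟪Q, R⟫ = 0 := by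
  classical
  set K := Submodule.span ℝ ({P, Q} : Set V)
  have hK : K ≠ ⊤ := by
    refine (span_lt_top_of_card_lt_finrank ?_).ne
    calc ({P, Q} : Set V).toFinset.card ≤ 2 := by
          simpa only [Set.toFinset_insert, Set.toFinset_singleton] using Finset.card_le_two
      _ < _ := h
  obtain ⟨R, hR, hR0⟩ := Submodule.exists_mem_ne_zero_of_ne_bot
    (mt Submodule.orthogonal_eq_bot_iff.mp hK)
  exact ⟨R, hR0, hR P (Submodule.subset_span (by simp)),
    hR Q (Submodule.subset_span (by simp))⟩

variable (S : V →ₗ[ℝ] V →ₗ[ℝ] ℝ) (ρ : ℝ)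

theorem mul_apply_mul_inner_self_mul_inner_self_eq_zero (hS : ∀ X Y : V, S X Y = S Y X)
    (hρ : ∀ X Y Z W : V,
      S Y Z * S X W - S X Z * S Y W = ρ * (⟪Y, Z⟫ * ⟪X, W⟫ - ⟪X, Z⟫ * ⟪Y, W⟫))
    {P Q R : V} (hPQ : ⟪P, Q⟫ = 0) (hPR : ⟪P, R⟫ = 0) (hQR : ⟪Q, R⟫ = 0) :
    ρ * S P Q * ⟪R, R⟫ * ⟪P, P⟫ = 0 := by
  have E₁ := hρ P R Q R
  have E₂ := hρ P R Q P
  have E₃ := hρ P R R P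
  rw [real_inner_comm R Q, real_inner_comm R P, hS R P] at *
  simp only [hPQ, hPR, hQR] at E₁ E₂ E₃
  linear_combination -(S P P * E₁ - S P R * E₂ + S P Q * E₃)

theorem mul_apply_eq_zero_of_inner_eq_zero [FiniteDimensional ℝ V]
    (h : 2 < Module.finrank ℝ V) (hS : ∀ X Y : V, S X Y = S Y X)
    (hρ : ∀ X Y Z W : V,
      S Y Z * S X W - S X Z * S Y W = ρ * (⟪Y, Z⟫ * ⟪X, W⟫ - ⟪X, Z⟫ * ⟪Y, W⟫))
    {P Q : V} (hP : P ≠ 0) (hPQ : ⟪P, Q⟫ = 0) : ρ * S P Q = 0 := by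
  obtain ⟨R, hR, hPR, hQR⟩ := exists_ne_zero_inner_eq_zero_of_two_lt_finrank h P Q
  have := mul_apply_mul_inner_self_mul_inner_self_eq_zero S ρ hS hρ hPQ hPR hQR
  simpa [hR, hP] using this

theorem mul_apply_eq_mul_apply_self_mul_inner [FiniteDimensional ℝ V]
    (h : 2 < Module.finrank ℝ V) (hS : ∀ X Y : V, S X Y = S Y X)
    (hρ : ∀ X Y Z W : V,
      S Y Z * S X W - S X Z * S Y W = ρ * (⟪Y, Z⟫ * ⟪X, W⟫ - ⟪X, Z⟫ * ⟪Y, W⟫))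
    {P : V} (hP : ⟪P, P⟫ = 1) (Z : V) : ρ * S P Z = ρ * S P P * ⟪P, Z⟫ := by
  have hP₀ : P ≠ 0 := by rintro rfl; simp at hP
  have hperp : ⟪P, Z - ⟪P, Z⟫ • P⟫ = 0 := by
    rw [inner_sub_right, real_inner_smul_right, hP, mul_one, sub_self]
  have := mul_apply_eq_zero_of_inner_eq_zero S ρ h hS hρ hP₀ hperp
  simp only [map_sub, map_smul, smul_eq_mul] at this
  linear_combination this

theorem apply_self_mul_apply_eq (hS : ∀ X Y : V, S X Y = S Y X)
    (hρ : ∀ X Y Z W : V,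
      S Y Z * S X W - S X Z * S Y W = ρ * (⟪Y, Z⟫ * ⟪X, W⟫ - ⟪X, Z⟫ * ⟪Y, W⟫))
    {P : V} (hP : ⟪P, P⟫ = 1) (Y Z : V) :
    S P P * S Y Z = S P Y * S P Z + ρ * (⟪Y, Z⟫ - ⟪P, Y⟫ * ⟪P, Z⟫) := by
  have := hρ P Y Z P
  rw [hP, hS Y P, real_inner_comm P Y] at this
  linear_combination this

end

/-- Let `(V, ⟪·,·⟫)` be a real inner product space of finite dimension `n ≥ 3`.
Let `Ŝ = S` be a symmetric bilinear form, `P ∈ V` a unit vector, `α = Ŝ(P,P) ≠ 0`, and suppose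
`Ŝ(Y,Z)Ŝ(X,W) − Ŝ(X,Z)Ŝ(Y,W) = ρ(g(Y,Z)g(X,W) − g(X,Z)g(Y,W))` for all `X,Y,Z,W` and some
`ρ ∈ ℝ`.  Then there exist reals `a, b` and a nonzero linear functional `η₀` on `V` such that
`Ŝ(Y,Z) = a·g(Y,Z) + b·η₀(Y)η₀(Z)` for all `Y, Z`; i.e. `Ŝ` has quasi-Einstein form. -/
theorem statement1 {V : Type*} [NormedAddCommGroup V] [InnerProductSpace ℝ V]
    [FiniteDimensional ℝ V] (h3 : 3 ≤ Module.finrank ℝ V)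
    (S : V →ₗ[ℝ] V →ₗ[ℝ] ℝ) (hSsymm : ∀ X Y : V, S X Y = S Y X)
    (P : V) (hP : ⟪P, P⟫ = 1) (hα : S P P ≠ 0) (ρ : ℝ)
    (hρ : ∀ X Y Z W : V,
      S Y Z * S X W - S X Z * S Y W =
        ρ * (⟪Y, Z⟫ * ⟪X, W⟫ - ⟪X, Z⟫ * ⟪Y, W⟫)) :
    ∃ (a b : ℝ) (η₀ : V →ₗ[ℝ] ℝ), η₀ ≠ 0 ∧
      ∀ Y Z : V, S Y Z = a * ⟪Y, Z⟫ + b * (η₀ Y * η₀ Z) := by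
  refine ⟨ρ / S P P, 1 / S P P - ρ / S P P ^ 3, S P, fun h ↦ hα (by simp [h]), fun Y Z ↦ ?_⟩
  have hπ := mul_apply_eq_mul_apply_self_mul_inner S ρ h3 hSsymm hρ hP
  have hSYZ := apply_self_mul_apply_eq S ρ hSsymm hρ hP Y Z
  field_simp
  linear_combination S P P ^ 2 * hSYZ + S P Z * hπ Y + S P P * ⟪P, Y⟫ * hπ Z
end

section
/- If moreover ρ ≠ 0, then Ŝ(Y,Z) = (ρ/α)·g(Y,Z) + (α − ρ/α)·π(Y)π(Z) for all Y, Z ∈ V. -/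
open scoped RealInnerProductSpace

/-!
Feeding a nonzero vector `y` orthogonal to `P` and `X` (it exists since `dim V ≥ 3`) into the
curvature identity three times and eliminating gives `ρ ‖y‖² (η(X) − α π(X)) = 0`, so
`η = α π`. With this, the identity at `(X, W) = (P, P)` reads
`α Ŝ(Y,Z) − α² π(Y)π(Z) = ρ (g(Y,Z) − π(Y)π(Z))`; divide by `α`.
-/

theorem exists_ne_zero_forall_inner_eq_zero {𝕜 E : Type*} [RCLike 𝕜] [NormedAddCommGroup E]
    [InnerProductSpace 𝕜 E] [FiniteDimensional 𝕜 E] (s : Finset E)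
    (hs : s.card < Module.finrank 𝕜 E) : ∃ y : E, y ≠ 0 ∧ ∀ x ∈ s, inner 𝕜 x y = 0 := by
  set K := Submodule.span 𝕜 (s : Set E)
  have hK : Module.finrank 𝕜 K ≤ s.card := finrank_span_finset_le_card s
  have hKperp : 0 < Module.finrank 𝕜 Kᗮ := by
    have := K.finrank_add_finrank_orthogonal
    omega
  obtain ⟨⟨y, hy⟩, hy0⟩ := Module.finrank_pos_iff_exists_ne_zero.mp hKperp
  exact ⟨y, by simpa using hy0, fun x hx ↦
    Submodule.inner_right_of_mem_orthogonal (Submodule.subset_span hx) hy⟩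

section

variable {V : Type*} [NormedAddCommGroup V] [InnerProductSpace ℝ V]
  {S : V →ₗ[ℝ] V →ₗ[ℝ] ℝ} {P : V} {ρ : ℝ}

theorem apply_left_eq_mul_inner_of_orthogonal (hS : ∀ X Y : V, S X Y = S Y X)
    (hP : ⟪P, P⟫ = 1)
    (hρ : ∀ X Y Z W : V,
      S Y Z * S X W - S X Z * S Y W = ρ * (⟪Y, Z⟫ * ⟪X, W⟫ - ⟪X, Z⟫ * ⟪Y, W⟫))
    (hρ0 : ρ ≠ 0) {X y : V} (hy0 : y ≠ 0) (hPy : ⟪P, y⟫ = 0) (hXy : ⟪X, y⟫ = 0) :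
    S P X = S P P * ⟪X, P⟫ := by
  have hyP : ⟪y, P⟫ = 0 := by rwa [real_inner_comm]
  have hyX : ⟪y, X⟫ = 0 := by rwa [real_inner_comm]
  have A := hρ X y y P
  have B := hρ P y y P
  have C := hρ P y X P
  simp only [hP, hyP, hPy, hyX, hXy, mul_zero, mul_one, sub_zero] at A B C
  rw [hS X y, hS y P, hS X P] at A
  rw [hS y P] at B C
  have key : (ρ * ⟪y, y⟫) * (S P X - S P P * ⟪X, P⟫) = 0 := by
    linear_combination S P P * A - S P X * B + S P y * C
  have hyy : ρ * ⟪y, y⟫ ≠ 0 := mul_ne_zero hρ0 (inner_self_ne_zero.mpr hy0)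
  exact sub_eq_zero.mp ((mul_eq_zero.mp key).resolve_left hyy)

theorem apply_left_eq_mul_inner [FiniteDimensional ℝ V] (h3 : 3 ≤ Module.finrank ℝ V)
    (hS : ∀ X Y : V, S X Y = S Y X) (hP : ⟪P, P⟫ = 1)
    (hρ : ∀ X Y Z W : V,
      S Y Z * S X W - S X Z * S Y W = ρ * (⟪Y, Z⟫ * ⟪X, W⟫ - ⟪X, Z⟫ * ⟪Y, W⟫))
    (hρ0 : ρ ≠ 0) (X : V) : S P X = S P P * ⟪X, P⟫ := by
  classical
  have hcard : ({P, X} : Finset V).card < Module.finrank ℝ V :=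
    (Finset.card_le_two).trans_lt h3
  obtain ⟨y, hy0, hy⟩ := exists_ne_zero_forall_inner_eq_zero (𝕜 := ℝ) {P, X} hcard
  exact apply_left_eq_mul_inner_of_orthogonal hS hP hρ hρ0 hy0 (hy P (by simp)) (hy X (by simp))

theorem apply_mul_apply_self_eq (hS : ∀ X Y : V, S X Y = S Y X) (hP : ⟪P, P⟫ = 1)
    (hρ : ∀ X Y Z W : V,
      S Y Z * S X W - S X Z * S Y W = ρ * (⟪Y, Z⟫ * ⟪X, W⟫ - ⟪X, Z⟫ * ⟪Y, W⟫))
    (hη : ∀ X : V, S P X = S P P * ⟪X, P⟫) (Y Z : V) :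
    S Y Z * S P P = ρ * ⟪Y, Z⟫ + (S P P * S P P - ρ) * (⟪Y, P⟫ * ⟪Z, P⟫) := by
  have E := hρ P Y Z P
  rw [hP, hS Y P, hη Y, hη Z, real_inner_comm Z P] at E
  linear_combination E

end

/-- Let `(V, ⟪·,·⟫)` be a real inner product space of finite dimension `n ≥ 3`.
Let `Ŝ = S` be a symmetric bilinear form, `P ∈ V` a unit vector, `π(X) = ⟪X,P⟫`,
`α = Ŝ(P,P) ≠ 0`, and suppose
`Ŝ(Y,Z)Ŝ(X,W) − Ŝ(X,Z)Ŝ(Y,W) = ρ(g(Y,Z)g(X,W) − g(X,Z)g(Y,W))` for all `X,Y,Z,W`.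
If moreover `ρ ≠ 0`, then `Ŝ(Y,Z) = (ρ/α)g(Y,Z) + (α − ρ/α)π(Y)π(Z)` for all `Y, Z`. -/
theorem statement2 {V : Type*} [NormedAddCommGroup V] [InnerProductSpace ℝ V]
    [FiniteDimensional ℝ V] (h3 : 3 ≤ Module.finrank ℝ V)
    (S : V →ₗ[ℝ] V →ₗ[ℝ] ℝ) (hSsymm : ∀ X Y : V, S X Y = S Y X)
    (P : V) (hP : ⟪P, P⟫ = 1) (hα : S P P ≠ 0) (ρ : ℝ)
    (hρ : ∀ X Y Z W : V,
      S Y Z * S X W - S X Z * S Y W =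
        ρ * (⟪Y, Z⟫ * ⟪X, W⟫ - ⟪X, Z⟫ * ⟪Y, W⟫))
    (hρ0 : ρ ≠ 0) :
    ∀ Y Z : V, S Y Z =
      (ρ / S P P) * ⟪Y, Z⟫ + (S P P - ρ / S P P) * (⟪Y, P⟫ * ⟪Z, P⟫) := by
  intro Y Z
  have hη := apply_left_eq_mul_inner h3 hSsymm hP hρ hρ0
  have h := apply_mul_apply_self_eq hSsymm hP hρ hη Y Z
  field_simp
  linear_combination h
end

section
/- Suppose P is nowhere vanishing, P is a Killing vector field of g (that is, g(∇_X P, Y) + g(∇_Y P, X) = 0 for all vector fields X, Y), and (U, g) is Einstein, i.e. S = c·g for some constant c ∈ ℝ. Then at every point Ŝ(Y,Z) = (c − (n−2)g(P,P))·g(Y,Z) + (n−2)·π(Y)π(Z); in particular, since n−2 ≠ 0 and π is nowhere zero, (U, ∇̄) is a semi-quasi-Einstein manifold (Ŝ = a·g + b·π⊗π with b ≠ 0 and π a nonzero 1-form). -/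
open scoped BigOperators

/-! Setup: an open set `U ⊆ ℝⁿ` with a Riemannian metric given by component functions
`g x i j`, the Levi-Civita connection computed from the Christoffel symbols, the
semi-symmetric metric connection `∇̄_X Y = ∇_X Y + π(Y)X − g(X,Y)P`, curvature and
Ricci tensors of a connection, and covariant derivatives of `(0,2)`-tensors. -/

/-- A vector field on (an open subset of) `ℝⁿ`. -/
abbrev VF (n : ℕ) := (Fin n → ℝ) → Fin n → ℝ

/-- Partial derivative `∂ᵢ f` of a real-valued function. -/
noncomputable def pd {n : ℕ} (i : Fin n) (f : (Fin n → ℝ) → ℝ) (x : Fin n → ℝ) : ℝ :=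
  fderiv ℝ f x (Pi.single i 1)

/-- The metric evaluated on two tangent vectors at the point `x`. -/
def gval {n : ℕ} (g : (Fin n → ℝ) → Fin n → Fin n → ℝ) (x v w : Fin n → ℝ) : ℝ :=
  ∑ i, ∑ j, g x i j * v i * w j

/-- The Christoffel symbols `Γ^k_{ij} = ½ g^{kl}(∂ᵢ g_{jl} + ∂ⱼ g_{il} − ∂_l g_{ij})`. -/
noncomputable def christoffel {n : ℕ} (g : (Fin n → ℝ) → Fin n → Fin n → ℝ)
    (x : Fin n → ℝ) (k i j : Fin n) : ℝ :=
  (1 / 2) * ∑ l, (Matrix.of (g x))⁻¹ k l *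
    (pd i (fun y => g y j l) x + pd j (fun y => g y i l) x - pd l (fun y => g y i j) x)

/-- The Levi-Civita covariant derivative `(∇_X Y)^k = X^i ∂ᵢ Y^k + Γ^k_{ij} X^i Y^j`. -/
noncomputable def lcCov {n : ℕ} (g : (Fin n → ℝ) → Fin n → Fin n → ℝ)
    (X Y : VF n) (x : Fin n → ℝ) : Fin n → ℝ :=
  fun k => fderiv ℝ (fun y => Y y k) x (X x) +
    ∑ i, ∑ j, christoffel g x k i j * X x i * Y x j

/-- The semi-symmetric metric connection `∇̄_X Y = ∇_X Y + π(Y)X − g(X,Y)P`,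
where `π(X) = g(X,P)`. -/
noncomputable def ssCov {n : ℕ} (g : (Fin n → ℝ) → Fin n → Fin n → ℝ)
    (P : VF n) (X Y : VF n) (x : Fin n → ℝ) : Fin n → ℝ :=
  fun k => lcCov g X Y x k + gval g x (Y x) (P x) * X x k - gval g x (X x) (Y x) * P x k

/-- The Lie bracket of vector fields. -/
noncomputable def lie {n : ℕ} (X Y : VF n) (x : Fin n → ℝ) : Fin n → ℝ :=
  fun k => fderiv ℝ (fun y => Y y k) x (X x) - fderiv ℝ (fun y => X y k) x (Y x)

/-- The curvature `R_D(X,Y)Z = D_X D_Y Z − D_Y D_X Z − D_{[X,Y]}Z` of a connection `D`. -/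
noncomputable def curv {n : ℕ} (D : VF n → VF n → VF n) (X Y Z : VF n)
    (x : Fin n → ℝ) : Fin n → ℝ :=
  fun k => D X (D Y Z) x k - D Y (D X Z) x k - D (lie X Y) Z x k

/-- The Ricci tensor `Ric_D(Y,Z) = trace (X ↦ R_D(X,Y)Z)` of a connection `D`
(the trace computed in the coordinate frame). -/
noncomputable def ricci {n : ℕ} (D : VF n → VF n → VF n) (Y Z : VF n)
    (x : Fin n → ℝ) : ℝ :=
  ∑ i, curv D (fun _ => Pi.single i 1) Y Z x i

/-- The symmetrization `Ŝ(Y,Z) = ½(S̄(Y,Z) + S̄(Z,Y))` of the Ricci tensor of the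
semi-symmetric metric connection. -/
noncomputable def shat {n : ℕ} (g : (Fin n → ℝ) → Fin n → Fin n → ℝ)
    (P : VF n) (Y Z : VF n) (x : Fin n → ℝ) : ℝ :=
  (ricci (ssCov g P) Y Z x + ricci (ssCov g P) Z Y x) / 2

/-- The covariant derivative `(D_X T)(Y,Z) = X(T(Y,Z)) − T(D_X Y, Z) − T(Y, D_X Z)` of a
`(0,2)`-tensor `T` along the connection `D`. -/
noncomputable def covT {n : ℕ} (D : VF n → VF n → VF n)
    (T : VF n → VF n → (Fin n → ℝ) → ℝ) (X Y Z : VF n) (x : Fin n → ℝ) : ℝ :=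
  fderiv ℝ (T Y Z) x (X x) - T (D X Y) Z x - T Y (D X Z) x

/-- Smoothness of a vector-field/metric-type map on `U`. -/
def SmoothVF {n : ℕ} {E : Type*} [NormedAddCommGroup E] [NormedSpace ℝ E]
    (U : Set (Fin n → ℝ)) (f : (Fin n → ℝ) → E) : Prop :=
  ContDiffOn ℝ (⊤ : ℕ∞) f U

section Infra

variable {n : ℕ}

/-- Linearity of a derivative in the direction: frame expansion. -/
lemma fderiv_frame (f : (Fin n → ℝ) → ℝ) (x v : Fin n → ℝ) :
    fderiv ℝ f x v = ∑ i, v i * fderiv ℝ f x (Pi.single i 1) := by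
  have hv : v = ∑ i, v i • (Pi.single i 1 : Fin n → ℝ) := by
    funext j
    simp [Pi.single_apply, Finset.sum_ite_eq', mul_comm]
  conv_lhs => rw [hv]
  rw [map_sum]
  simp [smul_eq_mul]

lemma contDiffAt_entry {g : (Fin n → ℝ) → Fin n → Fin n → ℝ} {U : Set (Fin n → ℝ)}
    (hU : IsOpen U) (hg : SmoothVF U g) {x : Fin n → ℝ} (hx : x ∈ U) (i j : Fin n) :
    ContDiffAt ℝ (⊤ : ℕ∞) (fun y => g y i j) x := by
  have h : ContDiffAt ℝ (⊤ : ℕ∞) g x := hg.contDiffAt (hU.mem_nhds hx)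
  have h1 : ContDiffAt ℝ (⊤ : ℕ∞) (fun y => g y i) x := (contDiffAt_pi.1 h) i
  exact (contDiffAt_pi.1 h1) j

lemma contDiffAt_comp_entry {Y : VF n} {U : Set (Fin n → ℝ)}
    (hU : IsOpen U) (hY : SmoothVF U Y) {x : Fin n → ℝ} (hx : x ∈ U) (k : Fin n) :
    ContDiffAt ℝ (⊤ : ℕ∞) (fun y => Y y k) x :=
  (contDiffAt_pi.1 (hY.contDiffAt (hU.mem_nhds hx))) k

lemma contDiffAt_pd {f : (Fin n → ℝ) → ℝ} {x : Fin n → ℝ}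
    (hf : ContDiffAt ℝ (⊤ : ℕ∞) f x) (l : Fin n) :
    ContDiffAt ℝ (⊤ : ℕ∞) (fun y => fderiv ℝ f y (Pi.single l 1)) x := by
  have h1 : ContDiffAt ℝ (⊤ : ℕ∞) (fderiv ℝ f) x := hf.fderiv_right (by simp)
  exact (ContinuousLinearMap.apply ℝ ℝ (Pi.single l (1:ℝ))).contDiff.contDiffAt.comp x h1

lemma contDiffAt_det {M : (Fin n → ℝ) → Matrix (Fin n) (Fin n) ℝ} {x : Fin n → ℝ}
    (h : ∀ a b, ContDiffAt ℝ (⊤ : ℕ∞) (fun y => M y a b) x) :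
    ContDiffAt ℝ (⊤ : ℕ∞) (fun y => (M y).det) x := by
  simp only [Matrix.det_apply']
  refine ContDiffAt.sum fun σ _ => ?_
  have h2 : ContDiffAt ℝ (⊤ : ℕ∞) (fun y => ∏ a, M y (σ a) a) x :=
    contDiffAt_prod fun a _ => h _ _
  simpa [zsmul_eq_mul] using h2.const_smul ((Equiv.Perm.sign σ : ℤ) : ℝ)

lemma contDiffAt_adjugate {M : (Fin n → ℝ) → Matrix (Fin n) (Fin n) ℝ} {x : Fin n → ℝ}
    (h : ∀ a b, ContDiffAt ℝ (⊤ : ℕ∞) (fun y => M y a b) x) (a b : Fin n) :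
    ContDiffAt ℝ (⊤ : ℕ∞) (fun y => (M y).adjugate a b) x := by
  simp only [Matrix.adjugate_apply]
  refine contDiffAt_det fun c d => ?_
  rcases eq_or_ne c b with rfl | hcb
  · simp only [Matrix.updateRow_self]
    exact contDiffAt_const
  · simp only [Matrix.updateRow_ne hcb]
    exact h c d

lemma contDiffAt_inv_entry {M : (Fin n → ℝ) → Matrix (Fin n) (Fin n) ℝ} {x : Fin n → ℝ}
    (h : ∀ a b, ContDiffAt ℝ (⊤ : ℕ∞) (fun y => M y a b) x) (hdet : (M x).det ≠ 0) (a b : Fin n) :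
    ContDiffAt ℝ (⊤ : ℕ∞) (fun y => (M y)⁻¹ a b) x := by
  have heq : (fun y => (M y)⁻¹ a b) = fun y => ((M y).det)⁻¹ * (M y).adjugate a b := by
    funext y
    rw [Matrix.inv_def, Matrix.smul_apply, Ring.inverse_eq_inv', smul_eq_mul]
  rw [heq]
  exact ((contDiffAt_det h).inv hdet).mul (contDiffAt_adjugate h a b)

end Infra
section Metric

variable {n : ℕ} {g : (Fin n → ℝ) → Fin n → Fin n → ℝ} {U : Set (Fin n → ℝ)}
  {x : Fin n → ℝ}

lemma g_symm (hgpos : ∀ x ∈ U, (Matrix.of (g x)).PosDef) (hx : x ∈ U) (i j : Fin n) :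
    g x i j = g x j i := by
  have h := (hgpos x hx).isHermitian.apply j i
  simpa using h

lemma g_det_ne (hgpos : ∀ x ∈ U, (Matrix.of (g x)).PosDef) (hx : x ∈ U) :
    (Matrix.of (g x)).det ≠ 0 := (hgpos x hx).det_pos.ne'

lemma g_mul_inv (hgpos : ∀ x ∈ U, (Matrix.of (g x)).PosDef) (hx : x ∈ U) (m l : Fin n) :
    ∑ k, g x m k * (Matrix.of (g x))⁻¹ k l = if m = l then 1 else 0 := by
  have h := Matrix.mul_nonsing_inv (Matrix.of (g x))
    (isUnit_iff_ne_zero.2 (g_det_ne hgpos hx))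
  have h2 := congrFun (congrFun h m) l
  simpa [Matrix.mul_apply, Matrix.one_apply] using h2

lemma inv_mul_g (hgpos : ∀ x ∈ U, (Matrix.of (g x)).PosDef) (hx : x ∈ U) (m l : Fin n) :
    ∑ k, (Matrix.of (g x))⁻¹ m k * g x k l = if m = l then 1 else 0 := by
  have h := Matrix.nonsing_inv_mul (Matrix.of (g x))
    (isUnit_iff_ne_zero.2 (g_det_ne hgpos hx))
  have h2 := congrFun (congrFun h m) l
  simpa [Matrix.mul_apply, Matrix.one_apply] using h2

lemma g_transpose (hgpos : ∀ x ∈ U, (Matrix.of (g x)).PosDef) (hx : x ∈ U) :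
    (Matrix.of (g x)).transpose = Matrix.of (g x) := by
  ext i j
  simpa using g_symm hgpos hx j i

lemma ginv_symm (hgpos : ∀ x ∈ U, (Matrix.of (g x)).PosDef) (hx : x ∈ U) (a b : Fin n) :
    (Matrix.of (g x))⁻¹ a b = (Matrix.of (g x))⁻¹ b a := by
  conv_lhs => rw [← g_transpose hgpos hx]
  rw [← Matrix.transpose_nonsing_inv]
  simp [Matrix.transpose_apply]

lemma pd_g_symm (hU : IsOpen U) (hgpos : ∀ x ∈ U, (Matrix.of (g x)).PosDef) (hx : x ∈ U)
    (l i j : Fin n) :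
    pd l (fun y => g y i j) x = pd l (fun y => g y j i) x := by
  unfold pd
  congr 1
  apply Filter.EventuallyEq.fderiv_eq
  filter_upwards [hU.mem_nhds hx] with y hy
  exact g_symm hgpos hy i j

lemma christoffel_symm (hU : IsOpen U) (hgpos : ∀ x ∈ U, (Matrix.of (g x)).PosDef)
    (hx : x ∈ U) (k i j : Fin n) :
    christoffel g x k i j = christoffel g x k j i := by
  unfold christoffel
  congr 1
  apply Finset.sum_congr rfl
  intro l _
  rw [pd_g_symm hU hgpos hx l i j]
  ring

lemma christoffel_contract (hU : IsOpen U) (hg : SmoothVF U g)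
    (hgpos : ∀ x ∈ U, (Matrix.of (g x)).PosDef) (hx : x ∈ U) (a b m : Fin n) :
    ∑ k, christoffel g x k a b * g x k m
      = (1/2) * (pd a (fun y => g y b m) x + pd b (fun y => g y a m) x
          - pd m (fun y => g y a b) x) := by
  unfold christoffel
  have step1 : ∀ k, ((1:ℝ)/2 * ∑ l, (Matrix.of (g x))⁻¹ k l *
      (pd a (fun y => g y b l) x + pd b (fun y => g y a l) x - pd l (fun y => g y a b) x))
      * g x k m
      = ∑ l, (1/2) * (pd a (fun y => g y b l) x + pd b (fun y => g y a l) x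
          - pd l (fun y => g y a b) x) * (g x m k * (Matrix.of (g x))⁻¹ k l) := by
    intro k
    rw [Finset.mul_sum, Finset.sum_mul]
    apply Finset.sum_congr rfl
    intro l _
    rw [g_symm hgpos hx m k]
    ring
  simp only [step1]
  rw [Finset.sum_comm]
  have step2 : ∀ l, ∑ k, (1/2) * (pd a (fun y => g y b l) x + pd b (fun y => g y a l) x
      - pd l (fun y => g y a b) x) * (g x m k * (Matrix.of (g x))⁻¹ k l)
      = (1/2) * (pd a (fun y => g y b l) x + pd b (fun y => g y a l) x
          - pd l (fun y => g y a b) x) * (if m = l then 1 else 0) := by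
    intro l
    rw [← Finset.mul_sum, g_mul_inv hgpos hx]
  simp only [step2]
  simp [Finset.sum_ite_eq, mul_comm]

lemma contDiffAt_christoffel (hU : IsOpen U) (hg : SmoothVF U g)
    (hgpos : ∀ x ∈ U, (Matrix.of (g x)).PosDef) (hx : x ∈ U) (k i j : Fin n) :
    ContDiffAt ℝ (⊤ : ℕ∞) (fun y => christoffel g y k i j) x := by
  unfold christoffel
  apply ContDiffAt.mul contDiffAt_const
  apply ContDiffAt.sum
  intro l _
  apply ContDiffAt.mul
  · exact contDiffAt_inv_entry (fun a b => contDiffAt_entry hU hg hx a b)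
      (g_det_ne hgpos hx) k l
  · unfold pd
    exact ((contDiffAt_pd (contDiffAt_entry hU hg hx j l) i).add
      (contDiffAt_pd (contDiffAt_entry hU hg hx i l) j)).sub
      (contDiffAt_pd (contDiffAt_entry hU hg hx i j) l)

end Metric
lemma sum3_comm' {n : ℕ} (f : Fin n → Fin n → Fin n → ℝ) :
    ∑ a, ∑ b, ∑ c, f a b c = ∑ c, ∑ b, ∑ a, f a b c := by
  have h1 : ∀ a : Fin n, ∑ b, ∑ c, f a b c = ∑ c, ∑ b, f a b c :=
    fun a => Finset.sum_comm
  simp only [h1]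
  rw [Finset.sum_comm]
  exact Finset.sum_congr rfl fun c _ => Finset.sum_comm

lemma sum4_reorder1 {n : ℕ} (f : Fin n → Fin n → Fin n → Fin n → ℝ) :
    ∑ a, ∑ b, ∑ m, ∑ k, f a b m k = ∑ k, ∑ b, ∑ m, ∑ a, f a b m k := by
  rw [Finset.sum_comm]
  have h : ∀ b : Fin n, ∑ a, ∑ m, ∑ k, f a b m k = ∑ k, ∑ m, ∑ a, f a b m k :=
    fun b => sum3_comm' _
  simp only [h]
  rw [Finset.sum_comm]

lemma sum4_reorder2 {n : ℕ} (f : Fin n → Fin n → Fin n → Fin n → ℝ) :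
    ∑ a, ∑ b, ∑ m, ∑ k, f a b m k = ∑ a, ∑ k, ∑ m, ∑ b, f a b m k :=
  Finset.sum_congr rfl fun a _ => sum3_comm' _

lemma gval_match {n : ℕ} (Γ : Fin n → Fin n → Fin n → ℝ) (G : Fin n → Fin n → ℝ)
    (hG : ∀ i j, G i j = G j i) (ξ w1 w2 d1 d2 : Fin n → ℝ) :
    ∑ a, ∑ b, ((∑ m, ξ m * ((∑ k, Γ k m a * G k b) + (∑ k, Γ k m b * G k a))) * w1 a * w2 b
       + G a b * d1 a * w2 b + G a b * w1 a * d2 b)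
    = (∑ i, ∑ j, G i j * (d1 i + ∑ a, ∑ b, Γ i a b * ξ a * w1 b) * w2 j)
      + (∑ i, ∑ j, G i j * w1 i * (d2 j + ∑ a, ∑ b, Γ j a b * ξ a * w2 b)) := by
  simp only [mul_add, add_mul, Finset.sum_mul, Finset.mul_sum, Finset.sum_add_distrib]
  have claim1 : ∑ a : Fin n, ∑ b : Fin n, ∑ m : Fin n, ∑ k : Fin n,
        ξ m * (Γ k m a * G k b) * w1 a * w2 b
      = ∑ i : Fin n, ∑ j : Fin n, ∑ c : Fin n, ∑ d : Fin n,
        G i j * (Γ i c d * ξ c * w1 d) * w2 j := by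
    rw [sum4_reorder1]
    exact Finset.sum_congr rfl fun k _ => Finset.sum_congr rfl fun b _ =>
      Finset.sum_congr rfl fun m _ => Finset.sum_congr rfl fun a _ => by ring
  have claim2 : ∑ a : Fin n, ∑ b : Fin n, ∑ m : Fin n, ∑ k : Fin n,
        ξ m * (Γ k m b * G k a) * w1 a * w2 b
      = ∑ i : Fin n, ∑ j : Fin n, ∑ c : Fin n, ∑ d : Fin n,
        G i j * w1 i * (Γ j c d * ξ c * w2 d) := by
    rw [sum4_reorder2]
    exact Finset.sum_congr rfl fun a _ => Finset.sum_congr rfl fun k _ =>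
      Finset.sum_congr rfl fun m _ => Finset.sum_congr rfl fun b _ => by rw [hG k a]; ring
  rw [claim1, claim2]
  ring
section Compat

variable {n : ℕ} {g : (Fin n → ℝ) → Fin n → Fin n → ℝ} {U : Set (Fin n → ℝ)}
  {x : Fin n → ℝ}

lemma pd_g_eq (hU : IsOpen U) (hg : SmoothVF U g)
    (hgpos : ∀ x ∈ U, (Matrix.of (g x)).PosDef) (hx : x ∈ U) (m a b : Fin n) :
    pd m (fun y => g y a b) x
      = (∑ k, christoffel g x k m a * g x k b) + (∑ k, christoffel g x k m b * g x k a) := by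
  rw [christoffel_contract hU hg hgpos hx m a b, christoffel_contract hU hg hgpos hx m b a,
    pd_g_symm hU hgpos hx m b a]
  ring

lemma fderiv_gval_expand {W₁ W₂ : VF n} (ξ : Fin n → ℝ)
    (hdg : ∀ a b, DifferentiableAt ℝ (fun y => g y a b) x)
    (hdW₁ : ∀ a, DifferentiableAt ℝ (fun y => W₁ y a) x)
    (hdW₂ : ∀ a, DifferentiableAt ℝ (fun y => W₂ y a) x) :
    fderiv ℝ (fun y => gval g y (W₁ y) (W₂ y)) x ξ
      = ∑ a, ∑ b, (fderiv ℝ (fun y => g y a b) x ξ * W₁ x a * W₂ x b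
          + g x a b * fderiv ℝ (fun y => W₁ y a) x ξ * W₂ x b
          + g x a b * W₁ x a * fderiv ℝ (fun y => W₂ y b) x ξ) := by
  have h1 : ∀ a b : Fin n, DifferentiableAt ℝ (fun y => g y a b * W₁ y a * W₂ y b) x :=
    fun a b => ((hdg a b).mul (hdW₁ a)).mul (hdW₂ b)
  have h2 : ∀ a : Fin n, DifferentiableAt ℝ (fun y => ∑ b, g y a b * W₁ y a * W₂ y b) x :=
    fun a => DifferentiableAt.fun_sum (fun b _ => h1 a b)
  have e0 : (fun y => gval g y (W₁ y) (W₂ y))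
      = fun y => ∑ a, ∑ b, g y a b * W₁ y a * W₂ y b := rfl
  rw [e0, fderiv_fun_sum (fun a _ => h2 a), ContinuousLinearMap.sum_apply]
  apply Finset.sum_congr rfl
  intro a _
  rw [fderiv_fun_sum (fun b _ => h1 a b), ContinuousLinearMap.sum_apply]
  apply Finset.sum_congr rfl
  intro b _
  rw [fderiv_fun_mul ((hdg a b).fun_mul (hdW₁ a)) (hdW₂ b)]
  simp only [ContinuousLinearMap.add_apply, ContinuousLinearMap.smul_apply, smul_eq_mul]
  rw [fderiv_fun_mul (hdg a b) (hdW₁ a)]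
  simp only [ContinuousLinearMap.add_apply, ContinuousLinearMap.smul_apply, smul_eq_mul]
  ring

/-- Metric compatibility of the Levi-Civita connection, in directional form. -/
lemma fderiv_gval {W₁ W₂ : VF n} (ξ : Fin n → ℝ)
    (hU : IsOpen U) (hg : SmoothVF U g)
    (hgpos : ∀ x ∈ U, (Matrix.of (g x)).PosDef) (hx : x ∈ U)
    (hdW₁ : ∀ a, DifferentiableAt ℝ (fun y => W₁ y a) x)
    (hdW₂ : ∀ a, DifferentiableAt ℝ (fun y => W₂ y a) x) :
    fderiv ℝ (fun y => gval g y (W₁ y) (W₂ y)) x ξ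
      = gval g x (fun k => fderiv ℝ (fun y => W₁ y k) x ξ
            + ∑ a, ∑ b, christoffel g x k a b * ξ a * W₁ x b) (W₂ x)
        + gval g x (W₁ x) (fun k => fderiv ℝ (fun y => W₂ y k) x ξ
            + ∑ a, ∑ b, christoffel g x k a b * ξ a * W₂ x b) := by
  have hdg : ∀ a b, DifferentiableAt ℝ (fun y => g y a b) x :=
    fun a b => (contDiffAt_entry hU hg hx a b).differentiableAt (by simp)
  rw [fderiv_gval_expand ξ hdg hdW₁ hdW₂]
  have hDg : ∀ a b : Fin n, fderiv ℝ (fun y => g y a b) x ξ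
      = ∑ m, ξ m * ((∑ k, christoffel g x k m a * g x k b)
          + (∑ k, christoffel g x k m b * g x k a)) := by
    intro a b
    rw [fderiv_frame]
    exact Finset.sum_congr rfl fun m _ => by rw [← pd_g_eq hU hg hgpos hx m a b]; rfl
  simp only [hDg]
  exact gval_match (fun k a b => christoffel g x k a b) (g x) (g_symm hgpos hx)
    ξ (W₁ x) (W₂ x) (fun a => fderiv ℝ (fun y => W₁ y a) x ξ)
    (fun a => fderiv ℝ (fun y => W₂ y a) x ξ)

end Compat
section Conn

variable {n : ℕ} {g : (Fin n → ℝ) → Fin n → Fin n → ℝ} {U : Set (Fin n → ℝ)}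
  {x : Fin n → ℝ}

lemma single_sum_collapse (f : Fin n → Fin n → ℝ) (i : Fin n) :
    ∑ a, ∑ b, f a b * ((Pi.single i 1 : Fin n → ℝ) a) = ∑ b, f i b := by
  rw [Finset.sum_comm]
  apply Finset.sum_congr rfl
  intro b _
  simp [Pi.single_apply]

/-- `lcCov` is tensorial (pointwise linear) in the direction argument. -/
lemma lcCov_linear (X W : VF n) (k : Fin n) :
    lcCov g X W x k = ∑ i, X x i * lcCov g (fun _ => Pi.single i 1) W x k := by
  unfold lcCov
  rw [fderiv_frame]
  have h :  ∀ i : Fin n, ∑ a, ∑ b, christoffel g x k a b * ((Pi.single i 1 : Fin n → ℝ) a) * W x b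
      = ∑ b, christoffel g x k i b * W x b := by
    intro i
    have : ∀ a b : Fin n, christoffel g x k a b * ((Pi.single i 1 : Fin n → ℝ) a) * W x b
        = (christoffel g x k a b * W x b) * ((Pi.single i 1 : Fin n → ℝ) a) := fun a b => by ring
    simp only [this]
    exact single_sum_collapse (fun a b => christoffel g x k a b * W x b) i
  have h2 : ∀ i : Fin n, X x i * (fderiv ℝ (fun y => W y k) x (Pi.single i 1)
      + ∑ a, ∑ b, christoffel g x k a b * ((Pi.single i 1 : Fin n → ℝ) a) * W x b)
      = X x i * fderiv ℝ (fun y => W y k) x (Pi.single i 1)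
        + ∑ b, X x i * (christoffel g x k i b * W x b) := by
    intro i
    rw [mul_add, h i, Finset.mul_sum]
  simp only [h2, Finset.sum_add_distrib]
  congr 1
  exact Finset.sum_congr rfl fun a _ => Finset.sum_congr rfl fun b _ => by ring

lemma diff_pd_entry {Z : VF n} {U : Set (Fin n → ℝ)} (hU : IsOpen U) (hZ : SmoothVF U Z)
    (hx : x ∈ U) (k a : Fin n) :
    DifferentiableAt ℝ (fun y => fderiv ℝ (fun z => Z z k) y (Pi.single a 1)) x :=
  (contDiffAt_pd (contDiffAt_comp_entry hU hZ hx k) a).differentiableAt (by simp)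

lemma diff_entryVF {Z : VF n} (hU : IsOpen U) (hZ : SmoothVF U Z) (hx : x ∈ U) (k : Fin n) :
    DifferentiableAt ℝ (fun y => Z y k) x :=
  (contDiffAt_comp_entry hU hZ hx k).differentiableAt (by simp)

lemma diff_lcCov (hU : IsOpen U) (hg : SmoothVF U g)
    (hgpos : ∀ x ∈ U, (Matrix.of (g x)).PosDef) (hx : x ∈ U)
    {Y Z : VF n} (hY : SmoothVF U Y) (hZ : SmoothVF U Z) (k : Fin n) :
    DifferentiableAt ℝ (fun y => lcCov g Y Z y k) x := by
  unfold lcCov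
  apply DifferentiableAt.add
  · have e : (fun y => fderiv ℝ (fun z => Z z k) y (Y y))
        = fun y => ∑ a, Y y a * fderiv ℝ (fun z => Z z k) y (Pi.single a 1) :=
      funext fun y => fderiv_frame _ y (Y y)
    rw [e]
    exact DifferentiableAt.fun_sum fun a _ =>
      (diff_entryVF hU hY hx a).mul (diff_pd_entry hU hZ hx k a)
  · exact DifferentiableAt.fun_sum fun a _ => DifferentiableAt.fun_sum fun b _ =>
      (((contDiffAt_christoffel hU hg hgpos hx k a b).differentiableAt (by simp)).mul
        (diff_entryVF hU hY hx a)).mul (diff_entryVF hU hZ hx b)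

lemma diff_gval (hU : IsOpen U) (hg : SmoothVF U g) (hx : x ∈ U)
    {W₁ W₂ : VF n} (h1 : ∀ a, DifferentiableAt ℝ (fun y => W₁ y a) x)
    (h2 : ∀ a, DifferentiableAt ℝ (fun y => W₂ y a) x) :
    DifferentiableAt ℝ (fun y => gval g y (W₁ y) (W₂ y)) x := by
  have e0 : (fun y => gval g y (W₁ y) (W₂ y))
      = fun y => ∑ a, ∑ b, g y a b * W₁ y a * W₂ y b := rfl
  rw [e0]
  exact DifferentiableAt.fun_sum fun a _ => DifferentiableAt.fun_sum fun b _ =>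
    ((((contDiffAt_entry hU hg hx a b).differentiableAt (by simp)).mul (h1 a)).mul (h2 b))

end Conn
section Conn2

variable {n : ℕ} {g : (Fin n → ℝ) → Fin n → Fin n → ℝ} {U : Set (Fin n → ℝ)}
  {x : Fin n → ℝ}

lemma gval_symm (hgpos : ∀ x ∈ U, (Matrix.of (g x)).PosDef) (hx : x ∈ U)
    (v w : Fin n → ℝ) : gval g x v w = gval g x w v := by
  unfold gval
  rw [Finset.sum_comm]
  apply Finset.sum_congr rfl
  intro a _
  apply Finset.sum_congr rfl
  intro b _
  rw [g_symm hgpos hx b a]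
  ring

lemma gval_add_left (p q w : Fin n → ℝ) :
    gval g x (fun k => p k + q k) w = gval g x p w + gval g x q w := by
  unfold gval
  beta_reduce
  simp only [mul_add, add_mul, ← Finset.sum_add_distrib]

lemma gval_lin3_left (A B C w : Fin n → ℝ) (c d : ℝ) :
    gval g x (fun b => A b + c * B b - d * C b) w
      = gval g x A w + c * gval g x B w - d * gval g x C w := by
  unfold gval
  beta_reduce
  simp only [Finset.mul_sum, mul_sub, mul_add, sub_eq_add_neg, neg_mul, mul_neg,
    ← Finset.sum_neg_distrib, ← Finset.sum_add_distrib]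
  apply Finset.sum_congr rfl
  intro a _
  apply Finset.sum_congr rfl
  intro b _
  ring

lemma gval_lin3_right (A B C v : Fin n → ℝ) (c d : ℝ) :
    gval g x v (fun b => A b + c * B b - d * C b)
      = gval g x v A + c * gval g x v B - d * gval g x v C := by
  unfold gval
  beta_reduce
  simp only [Finset.mul_sum, mul_sub, mul_add, sub_eq_add_neg, neg_mul, mul_neg,
    ← Finset.sum_neg_distrib, ← Finset.sum_add_distrib]
  apply Finset.sum_congr rfl
  intro a _
  apply Finset.sum_congr rfl
  intro b _
  ring

lemma lcCov_single (W : VF n) (i k : Fin n) :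
    lcCov g (fun _ => Pi.single i 1) W x k
      = fderiv ℝ (fun y => W y k) x (Pi.single i 1) + ∑ b, christoffel g x k i b * W x b := by
  unfold lcCov
  congr 1
  have h : ∀ a b : Fin n, christoffel g x k a b * ((fun _ => Pi.single i 1 : VF n) x) a * W x b
      = (christoffel g x k a b * W x b) * ((Pi.single i 1 : Fin n → ℝ) a) := fun a b => by ring
  simp only [h]
  exact single_sum_collapse (fun a b => christoffel g x k a b * W x b) i

lemma lcCov_const_right (Y : VF n) (i k : Fin n) :
    lcCov g Y (fun _ => Pi.single i 1) x k = ∑ a, christoffel g x k a i * Y x a := by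
  unfold lcCov
  beta_reduce
  rw [fderiv_fun_const]
  simp only [Pi.zero_apply, ContinuousLinearMap.zero_apply, zero_add]
  have h2 : ∀ a : Fin n, ∑ b, christoffel g x k a b * Y x a * (Pi.single i 1 : Fin n → ℝ) b
      = christoffel g x k a i * Y x a := by
    intro a
    simp [Pi.single_apply]
  simp only [h2]

lemma lie_single (Y : VF n) (i : Fin n) :
    lie (fun _ => Pi.single i 1) Y x = fun k => fderiv ℝ (fun y => Y y k) x (Pi.single i 1) := by
  funext k
  unfold lie
  simp only [fderiv_fun_const]
  simp

/-- Torsion-freeness specialised to a constant frame field. -/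
lemma torsion_free (hU : IsOpen U) (hgpos : ∀ x ∈ U, (Matrix.of (g x)).PosDef)
    (hx : x ∈ U) (Y : VF n) (i : Fin n) :
    lcCov g (fun _ => Pi.single i 1) Y x
      = fun k => lie (fun _ => Pi.single i 1) Y x k
          + lcCov g Y (fun _ => Pi.single i 1) x k := by
  funext k
  rw [lcCov_single, lcCov_const_right, lie_single]
  have h : ∑ a, christoffel g x k a i * Y x a = ∑ b, christoffel g x k i b * Y x b := by
    apply Finset.sum_congr rfl
    intro a _
    rw [christoffel_symm hU hgpos hx k a i]
  rw [h]

/-- Metric compatibility phrased with `lcCov`. -/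
lemma fderiv_gval_lc (hU : IsOpen U) (hg : SmoothVF U g)
    (hgpos : ∀ x ∈ U, (Matrix.of (g x)).PosDef) (hx : x ∈ U)
    (X W₁ W₂ : VF n) (ξ : Fin n → ℝ) (hξ : X x = ξ)
    (hdW₁ : ∀ a, DifferentiableAt ℝ (fun y => W₁ y a) x)
    (hdW₂ : ∀ a, DifferentiableAt ℝ (fun y => W₂ y a) x) :
    fderiv ℝ (fun y => gval g y (W₁ y) (W₂ y)) x ξ
      = gval g x (lcCov g X W₁ x) (W₂ x) + gval g x (W₁ x) (lcCov g X W₂ x) := by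
  subst hξ
  exact fderiv_gval (X x) hU hg hgpos hx hdW₁ hdW₂

end Conn2
section Terms

variable {n : ℕ} {g : (Fin n → ℝ) → Fin n → Fin n → ℝ} {U : Set (Fin n → ℝ)}
  {x : Fin n → ℝ}

lemma term1_diff (hU : IsOpen U) (hg : SmoothVF U g)
    (hgpos : ∀ x ∈ U, (Matrix.of (g x)).PosDef) (hx : x ∈ U)
    {P Y Z : VF n} (hP : SmoothVF U P) (hY : SmoothVF U Y) (hZ : SmoothVF U Z) (i k : Fin n) :
    ssCov g P (fun _ => Pi.single i 1) (ssCov g P Y Z) x k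
      = lcCov g (fun _ => Pi.single i 1) (lcCov g Y Z) x k
        + fderiv ℝ (fun y => gval g y (Z y) (P y)) x (Pi.single i 1) * Y x k
        + gval g x (Z x) (P x) * lcCov g (fun _ => Pi.single i 1) Y x k
        - fderiv ℝ (fun y => gval g y (Y y) (Z y)) x (Pi.single i 1) * P x k
        - gval g x (Y x) (Z x) * lcCov g (fun _ => Pi.single i 1) P x k
        + gval g x (ssCov g P Y Z x) (P x) * (Pi.single i 1 : Fin n → ℝ) k
        - gval g x (Pi.single i 1) (ssCov g P Y Z x) * P x k := by
  have du : DifferentiableAt ℝ (fun y => gval g y (Z y) (P y)) x :=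
    diff_gval hU hg hx (fun a => diff_entryVF hU hZ hx a) (fun a => diff_entryVF hU hP hx a)
  have dv : DifferentiableAt ℝ (fun y => gval g y (Y y) (Z y)) x :=
    diff_gval hU hg hx (fun a => diff_entryVF hU hY hx a) (fun a => diff_entryVF hU hZ hx a)
  have dlc : DifferentiableAt ℝ (fun y => lcCov g Y Z y k) x := diff_lcCov hU hg hgpos hx hY hZ k
  have dY := diff_entryVF hU hY hx k
  have dP := diff_entryVF hU hP hx k
  have e1 : ssCov g P (fun _ => Pi.single i 1) (ssCov g P Y Z) x k
      = lcCov g (fun _ => Pi.single i 1) (ssCov g P Y Z) x k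
        + gval g x (ssCov g P Y Z x) (P x) * (Pi.single i 1 : Fin n → ℝ) k
        - gval g x (Pi.single i 1) (ssCov g P Y Z x) * P x k := rfl
  rw [e1, lcCov_single]
  have e2 : (fun y => ssCov g P Y Z y k)
      = fun y => lcCov g Y Z y k + gval g y (Z y) (P y) * Y y k
          - gval g y (Y y) (Z y) * P y k := rfl
  rw [e2]
  rw [fderiv_fun_sub (dlc.fun_add (du.fun_mul dY)) (dv.fun_mul dP)]
  simp only [ContinuousLinearMap.sub_apply]
  rw [fderiv_fun_add dlc (du.fun_mul dY)]
  simp only [ContinuousLinearMap.add_apply]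
  rw [fderiv_fun_mul du dY, fderiv_fun_mul dv dP]
  simp only [ContinuousLinearMap.add_apply, ContinuousLinearMap.smul_apply, smul_eq_mul]
  have e3 : ∀ b : Fin n, christoffel g x k i b * ssCov g P Y Z x b
      = christoffel g x k i b * lcCov g Y Z x b
        + gval g x (Z x) (P x) * (christoffel g x k i b * Y x b)
        - gval g x (Y x) (Z x) * (christoffel g x k i b * P x b) := by
    intro b
    have e : ssCov g P Y Z x b = lcCov g Y Z x b + gval g x (Z x) (P x) * Y x b
        - gval g x (Y x) (Z x) * P x b := rfl
    rw [e]; ring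
  simp only [e3, Finset.sum_add_distrib, Finset.sum_sub_distrib, ← Finset.mul_sum]
  rw [lcCov_single (W := lcCov g Y Z), lcCov_single (W := Y), lcCov_single (W := P)]
  ring

lemma term2_diff (hU : IsOpen U) (hg : SmoothVF U g)
    (hgpos : ∀ x ∈ U, (Matrix.of (g x)).PosDef) (hx : x ∈ U)
    {P Y Z : VF n} (hP : SmoothVF U P) (hY : SmoothVF U Y) (hZ : SmoothVF U Z) (i k : Fin n) :
    ssCov g P Y (ssCov g P (fun _ => Pi.single i 1) Z) x k
      = lcCov g Y (lcCov g (fun _ => Pi.single i 1) Z) x k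
        + fderiv ℝ (fun y => gval g y (Z y) (P y)) x (Y x) * (Pi.single i 1 : Fin n → ℝ) k
        + gval g x (Z x) (P x) * lcCov g Y (fun _ => Pi.single i 1) x k
        - fderiv ℝ (fun y => gval g y (Pi.single i 1) (Z y)) x (Y x) * P x k
        - gval g x (Pi.single i 1) (Z x) * lcCov g Y P x k
        + gval g x (ssCov g P (fun _ => Pi.single i 1) Z x) (P x) * Y x k
        - gval g x (Y x) (ssCov g P (fun _ => Pi.single i 1) Z x) * P x k := by
  have hE : SmoothVF U (fun _ => Pi.single i 1 : VF n) := contDiffOn_const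
  have dlcE : DifferentiableAt ℝ (fun y => lcCov g (fun _ => Pi.single i 1) Z y k) x :=
    diff_lcCov hU hg hgpos hx hE hZ k
  have du : DifferentiableAt ℝ (fun y => gval g y (Z y) (P y)) x :=
    diff_gval hU hg hx (fun a => diff_entryVF hU hZ hx a) (fun a => diff_entryVF hU hP hx a)
  have dw : DifferentiableAt ℝ (fun y => gval g y (Pi.single i 1) (Z y)) x :=
    diff_gval hU hg hx (W₁ := fun _ => Pi.single i 1)
      (fun a => differentiableAt_const _) (fun a => diff_entryVF hU hZ hx a)
  have dP := diff_entryVF hU hP hx k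
  have e1 : ssCov g P Y (ssCov g P (fun _ => Pi.single i 1) Z) x k
      = (fderiv ℝ (fun y => ssCov g P (fun _ => Pi.single i 1) Z y k) x (Y x)
          + ∑ a, ∑ b, christoffel g x k a b * Y x a
              * ssCov g P (fun _ => Pi.single i 1) Z x b)
        + gval g x (ssCov g P (fun _ => Pi.single i 1) Z x) (P x) * Y x k
        - gval g x (Y x) (ssCov g P (fun _ => Pi.single i 1) Z x) * P x k := rfl
  rw [e1]
  have e2 : (fun y => ssCov g P (fun _ => Pi.single i 1) Z y k)
      = fun y => lcCov g (fun _ => Pi.single i 1) Z y k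
          + gval g y (Z y) (P y) * (Pi.single i 1 : Fin n → ℝ) k
          - gval g y (Pi.single i 1) (Z y) * P y k := rfl
  rw [e2]
  rw [fderiv_fun_sub (dlcE.fun_add (du.mul_const _)) (dw.fun_mul dP)]
  simp only [ContinuousLinearMap.sub_apply]
  rw [fderiv_fun_add dlcE (du.mul_const _)]
  simp only [ContinuousLinearMap.add_apply]
  rw [fderiv_mul_const du, fderiv_fun_mul dw dP]
  simp only [ContinuousLinearMap.add_apply, ContinuousLinearMap.smul_apply, smul_eq_mul]
  have e3 : ∀ a b : Fin n, christoffel g x k a b * Y x a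
        * ssCov g P (fun _ => Pi.single i 1) Z x b
      = christoffel g x k a b * Y x a * lcCov g (fun _ => Pi.single i 1) Z x b
        + gval g x (Z x) (P x)
            * (christoffel g x k a b * Y x a * (Pi.single i 1 : Fin n → ℝ) b)
        - gval g x (Pi.single i 1) (Z x) * (christoffel g x k a b * Y x a * P x b) := by
    intro a b
    have e : ssCov g P (fun _ => Pi.single i 1) Z x b
        = lcCov g (fun _ => Pi.single i 1) Z x b
          + gval g x (Z x) (P x) * (Pi.single i 1 : Fin n → ℝ) b
          - gval g x (Pi.single i 1) (Z x) * P x b := rfl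
    rw [e]; ring
  simp only [e3, Finset.sum_add_distrib, Finset.sum_sub_distrib, ← Finset.mul_sum]
  have hcol : ∑ a, ∑ b, christoffel g x k a b * Y x a * (Pi.single i 1 : Fin n → ℝ) b
      = ∑ a, christoffel g x k a i * Y x a := by
    apply Finset.sum_congr rfl
    intro a _
    simp [Pi.single_apply]
  rw [hcol, ← lcCov_const_right]
  have e4 : lcCov g Y (lcCov g (fun _ => Pi.single i 1) Z) x k
      = fderiv ℝ (fun y => lcCov g (fun _ => Pi.single i 1) Z y k) x (Y x)
        + ∑ a, ∑ b, christoffel g x k a b * Y x a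
            * lcCov g (fun _ => Pi.single i 1) Z x b := rfl
  have e5 : lcCov g Y P x k
      = fderiv ℝ (fun y => P y k) x (Y x)
        + ∑ a, ∑ b, christoffel g x k a b * Y x a * P x b := rfl
  rw [e4, e5]
  ring

end Terms
section CurvDiff

variable {n : ℕ} {g : (Fin n → ℝ) → Fin n → Fin n → ℝ} {U : Set (Fin n → ℝ)}
  {x : Fin n → ℝ}

lemma curv_diff (hU : IsOpen U) (hg : SmoothVF U g)
    (hgpos : ∀ x ∈ U, (Matrix.of (g x)).PosDef) (hx : x ∈ U)
    {P Y Z : VF n} (hP : SmoothVF U P) (hY : SmoothVF U Y) (hZ : SmoothVF U Z) (i k : Fin n) :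
    curv (ssCov g P) (fun _ => Pi.single i 1) Y Z x k
      = curv (lcCov g) (fun _ => Pi.single i 1) Y Z x k
        + (gval g x (lcCov g (fun _ => Pi.single i 1) P x) (Z x)
            - gval g x (Pi.single i 1) (P x) * gval g x (Z x) (P x)
            + gval g x (P x) (P x) * gval g x (Pi.single i 1) (Z x)) * Y x k
        - (gval g x (lcCov g Y P x) (Z x)
            - gval g x (Y x) (P x) * gval g x (Z x) (P x)
            + gval g x (P x) (P x) * gval g x (Y x) (Z x)) * (Pi.single i 1 : Fin n → ℝ) k
        - gval g x (Y x) (Z x) * (lcCov g (fun _ => Pi.single i 1) P x k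
            - gval g x (Pi.single i 1) (P x) * P x k)
        + gval g x (Pi.single i 1) (Z x) * (lcCov g Y P x k
            - gval g x (Y x) (P x) * P x k) := by
  have dZs := fun a => diff_entryVF hU hZ hx a
  have dPs := fun a => diff_entryVF hU hP hx a
  have dYs := fun a => diff_entryVF hU hY hx a
  unfold curv
  rw [term1_diff hU hg hgpos hx hP hY hZ i k, term2_diff hU hg hgpos hx hP hY hZ i k]
  have e3 : ssCov g P (lie (fun _ => Pi.single i 1) Y) Z x k
      = lcCov g (lie (fun _ => Pi.single i 1) Y) Z x k
        + gval g x (Z x) (P x) * lie (fun _ => Pi.single i 1) Y x k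
        - gval g x (lie (fun _ => Pi.single i 1) Y x) (Z x) * P x k := rfl
  rw [e3]
  rw [fderiv_gval_lc hU hg hgpos hx (fun _ => Pi.single i 1) Z P (Pi.single i 1) rfl dZs dPs]
  rw [fderiv_gval_lc hU hg hgpos hx Y Z P (Y x) rfl dZs dPs]
  rw [fderiv_gval_lc hU hg hgpos hx (fun _ => Pi.single i 1) Y Z (Pi.single i 1) rfl dYs dZs]
  rw [fderiv_gval_lc hU hg hgpos hx Y (fun _ => Pi.single i 1) Z (Y x) rfl
    (fun a => differentiableAt_const _) dZs]
  have eA : ssCov g P Y Z x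
      = fun b => lcCov g Y Z x b + gval g x (Z x) (P x) * Y x b
          - gval g x (Y x) (Z x) * P x b := rfl
  have eB : ssCov g P (fun _ => Pi.single i 1) Z x
      = fun b => lcCov g (fun _ => Pi.single i 1) Z x b
          + gval g x (Z x) (P x) * (Pi.single i 1 : Fin n → ℝ) b
          - gval g x (Pi.single i 1) (Z x) * P x b := rfl
  rw [eA, eB]
  rw [gval_lin3_left (lcCov g Y Z x) (Y x) (P x) (P x) (gval g x (Z x) (P x))
    (gval g x (Y x) (Z x))]
  rw [gval_lin3_right (lcCov g Y Z x) (Y x) (P x) (Pi.single i 1) (gval g x (Z x) (P x))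
    (gval g x (Y x) (Z x))]
  rw [gval_lin3_left (lcCov g (fun _ => Pi.single i 1) Z x) (Pi.single i 1) (P x) (P x)
    (gval g x (Z x) (P x)) (gval g x (Pi.single i 1) (Z x))]
  rw [gval_lin3_right (lcCov g (fun _ => Pi.single i 1) Z x) (Pi.single i 1) (P x) (Y x)
    (gval g x (Z x) (P x)) (gval g x (Pi.single i 1) (Z x))]
  simp only [torsion_free hU hgpos hx Y i, lie_single]
  rw [gval_add_left (fun k => fderiv ℝ (fun y => Y y k) x (Pi.single i 1))
    (lcCov g Y (fun _ => Pi.single i 1) x) (Z x)]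
  rw [show gval g x (Z x) (lcCov g (fun _ => Pi.single i 1) P x)
      = gval g x (lcCov g (fun _ => Pi.single i 1) P x) (Z x) from gval_symm hgpos hx _ _]
  rw [show gval g x (Z x) (lcCov g Y P x)
      = gval g x (lcCov g Y P x) (Z x) from gval_symm hgpos hx _ _]
  rw [show gval g x (Y x) (Pi.single i 1)
      = gval g x (Pi.single i 1) (Y x) from gval_symm hgpos hx _ _]
  ring

end CurvDiff
section Trace

variable {n : ℕ} {g : (Fin n → ℝ) → Fin n → Fin n → ℝ} {U : Set (Fin n → ℝ)}
  {x : Fin n → ℝ}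

lemma gval_single_left (i : Fin n) (w : Fin n → ℝ) :
    gval g x (Pi.single i 1) w = ∑ b, g x i b * w b := by
  unfold gval
  have h : ∀ a b : Fin n, g x a b * (Pi.single i 1 : Fin n → ℝ) a * w b
      = (g x a b * w b) * (Pi.single i 1 : Fin n → ℝ) a := fun a b => by ring
  simp only [h]
  exact single_sum_collapse (fun a b => g x a b * w b) i

lemma gval_single_right (l : Fin n) (v : Fin n → ℝ) :
    gval g x v (Pi.single l 1) = ∑ a, g x a l * v a := by
  unfold gval
  apply Finset.sum_congr rfl
  intro a _
  simp [Pi.single_apply]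

/-- Trace identity: `∑ i g(eᵢ, w) Vᵢ = g(V, w)`. -/
lemma sum_gval_single (w V : Fin n → ℝ) :
    ∑ i, gval g x (Pi.single i 1) w * V i = gval g x V w := by
  simp only [gval_single_left]
  unfold gval
  simp only [Finset.sum_mul]
  apply Finset.sum_congr rfl
  intro a _
  apply Finset.sum_congr rfl
  intro b _
  ring

lemma gval_sum_left (c : Fin n → ℝ) (V : Fin n → Fin n → ℝ) (w : Fin n → ℝ) :
    gval g x (fun k => ∑ i, c i * V i k) w = ∑ i, c i * gval g x (V i) w := by
  unfold gval
  beta_reduce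
  have h : ∀ a b : Fin n, g x a b * (∑ i, c i * V i a) * w b
      = ∑ i, g x a b * (c i * V i a) * w b := by
    intro a b
    rw [Finset.mul_sum, Finset.sum_mul]
  simp only [h]
  have h2 : ∀ a : Fin n, ∑ b, ∑ i, g x a b * (c i * V i a) * w b
      = ∑ i, ∑ b, g x a b * (c i * V i a) * w b := fun a => Finset.sum_comm
  simp only [h2]
  rw [Finset.sum_comm]
  apply Finset.sum_congr rfl
  intro i _
  rw [Finset.mul_sum]
  apply Finset.sum_congr rfl
  intro a _
  rw [Finset.mul_sum]
  apply Finset.sum_congr rfl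
  intro b _
  ring

lemma sum_gval_lc (P Y Z : VF n) :
    ∑ i, gval g x (lcCov g (fun _ => Pi.single i 1) P x) (Z x) * Y x i
      = gval g x (lcCov g Y P x) (Z x) := by
  have e : lcCov g Y P x
      = fun k => ∑ i, Y x i * lcCov g (fun _ => Pi.single i 1) P x k :=
    funext fun k => lcCov_linear Y P k
  rw [e, gval_sum_left]
  apply Finset.sum_congr rfl
  intro i _
  ring

lemma sum_single_diag : ∑ i : Fin n, (Pi.single i 1 : Fin n → ℝ) i = (n : ℝ) := by
  simp

/-- The Ricci tensor of the semi-symmetric metric connection. -/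
lemma sbar_eq (hU : IsOpen U) (hg : SmoothVF U g)
    (hgpos : ∀ x ∈ U, (Matrix.of (g x)).PosDef) (hx : x ∈ U)
    {P Y Z : VF n} (hP : SmoothVF U P) (hY : SmoothVF U Y) (hZ : SmoothVF U Z) :
    ricci (ssCov g P) Y Z x
      = ricci (lcCov g) Y Z x
        - ((n : ℝ) - 1) * (gval g x (lcCov g Y P x) (Z x)
            - gval g x (Y x) (P x) * gval g x (Z x) (P x)
            + gval g x (P x) (P x) * gval g x (Y x) (Z x))
        - gval g x (Y x) (Z x) * ((∑ j, lcCov g (fun _ => Pi.single j 1) P x j)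
            - gval g x (P x) (P x))
        + gval g x (lcCov g Y P x) (Z x)
        - gval g x (Y x) (P x) * gval g x (P x) (Z x) := by
  unfold ricci
  have h : ∀ i : Fin n, curv (ssCov g P) (fun _ => Pi.single i 1) Y Z x i
      = curv (lcCov g) (fun _ => Pi.single i 1) Y Z x i
        + gval g x (lcCov g (fun _ => Pi.single i 1) P x) (Z x) * Y x i
        - gval g x (Z x) (P x) * (gval g x (Pi.single i 1) (P x) * Y x i)
        + gval g x (P x) (P x) * (gval g x (Pi.single i 1) (Z x) * Y x i)
        - (gval g x (lcCov g Y P x) (Z x)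
            - gval g x (Y x) (P x) * gval g x (Z x) (P x)
            + gval g x (P x) (P x) * gval g x (Y x) (Z x)) * (Pi.single i 1 : Fin n → ℝ) i
        - gval g x (Y x) (Z x) * lcCov g (fun _ => Pi.single i 1) P x i
        + gval g x (Y x) (Z x) * (gval g x (Pi.single i 1) (P x) * P x i)
        + gval g x (Pi.single i 1) (Z x) * lcCov g Y P x i
        - gval g x (Y x) (P x) * (gval g x (Pi.single i 1) (Z x) * P x i) := by
    intro i
    rw [curv_diff hU hg hgpos hx hP hY hZ i i]
    ring
  simp only [h, Finset.sum_add_distrib, Finset.sum_sub_distrib, ← Finset.mul_sum]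
  rw [sum_gval_lc, sum_gval_single (P x) (Y x), sum_gval_single (Z x) (Y x),
    sum_single_diag, sum_gval_single (P x) (P x), sum_gval_single (Z x) (lcCov g Y P x),
    sum_gval_single (Z x) (P x)]
  ring

end Trace
section Kill

variable {n : ℕ} {g : (Fin n → ℝ) → Fin n → Fin n → ℝ} {U : Set (Fin n → ℝ)}
  {x : Fin n → ℝ}

lemma lc_single_via_inv (hU : IsOpen U) (hg : SmoothVF U g)
    (hgpos : ∀ x ∈ U, (Matrix.of (g x)).PosDef) (hx : x ∈ U) (P : VF n) (j : Fin n) :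
    lcCov g (fun _ => Pi.single j 1) P x j
      = ∑ l, (Matrix.of (g x))⁻¹ j l
          * gval g x (lcCov g (fun _ => Pi.single j 1) P x) (Pi.single l 1) := by
  simp only [gval_single_right]
  have h : ∀ l : Fin n, (Matrix.of (g x))⁻¹ j l
        * ∑ a, g x a l * lcCov g (fun _ => Pi.single j 1) P x a
      = ∑ a, ((Matrix.of (g x))⁻¹ j l * g x l a)
          * lcCov g (fun _ => Pi.single j 1) P x a := by
    intro l
    rw [Finset.mul_sum]
    apply Finset.sum_congr rfl
    intro a _
    rw [g_symm hgpos hx a l]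
    ring
  simp only [h]
  rw [Finset.sum_comm]
  have h2 : ∀ a : Fin n, ∑ l, ((Matrix.of (g x))⁻¹ j l * g x l a)
        * lcCov g (fun _ => Pi.single j 1) P x a
      = (if j = a then 1 else 0) * lcCov g (fun _ => Pi.single j 1) P x a := by
    intro a
    rw [← Finset.sum_mul, inv_mul_g hgpos hx]
  simp only [h2]
  simp [Finset.sum_ite_eq]

lemma T_zero (hU : IsOpen U) (hg : SmoothVF U g)
    (hgpos : ∀ x ∈ U, (Matrix.of (g x)).PosDef) (hx : x ∈ U) (P : VF n)
    (hkill : ∀ v w : Fin n → ℝ,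
      gval g x (lcCov g (fun _ => v) P x) w + gval g x (lcCov g (fun _ => w) P x) v = 0) :
    ∑ j, lcCov g (fun _ => Pi.single j 1) P x j = 0 := by
  set K : Fin n → Fin n → ℝ := fun j l =>
    gval g x (lcCov g (fun _ => Pi.single j 1) P x) (Pi.single l 1) with hK
  have hT : ∑ j, lcCov g (fun _ => Pi.single j 1) P x j
      = ∑ j, ∑ l, (Matrix.of (g x))⁻¹ j l * K j l := by
    apply Finset.sum_congr rfl
    intro j _
    exact lc_single_via_inv hU hg hgpos hx P j
  have hKanti : ∀ j l, K l j = - K j l := by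
    intro j l
    have := hkill (Pi.single j 1) (Pi.single l 1)
    simp only [hK]
    linarith
  have hneg : ∑ j, ∑ l, (Matrix.of (g x))⁻¹ j l * K j l
      = - ∑ j, ∑ l, (Matrix.of (g x))⁻¹ j l * K j l := by
    conv_lhs => rw [Finset.sum_comm]
    rw [← Finset.sum_neg_distrib]
    apply Finset.sum_congr rfl
    intro j _
    rw [← Finset.sum_neg_distrib]
    apply Finset.sum_congr rfl
    intro l _
    rw [ginv_symm hgpos hx l j, hKanti j l]
    ring
  rw [hT]
  linarith [hneg]

lemma gval_pos (hgpos : ∀ x ∈ U, (Matrix.of (g x)).PosDef) (hx : x ∈ U)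
    (v : Fin n → ℝ) (hv : v ≠ 0) : 0 < gval g x v v := by
  have h := (Matrix.posDef_iff_dotProduct_mulVec.1 (hgpos x hx)).2 hv
  have e : dotProduct (star v) ((Matrix.of (g x)).mulVec v) = gval g x v v := by
    unfold gval
    simp only [dotProduct, Matrix.mulVec, Pi.star_apply, star_trivial, Matrix.of_apply,
      Finset.mul_sum]
    apply Finset.sum_congr rfl
    intro a _
    apply Finset.sum_congr rfl
    intro b _
    ring
  rw [e] at h
  exact h

end Kill
/-- On an open `U ⊆ ℝⁿ` (`n ≥ 3`) with Riemannian metric `g`, Levi-Civita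
connection `∇`, vector field `P`, `π(X) = g(X,P)`, semi-symmetric metric connection `∇̄`,
`S = Ric_∇`, `S̄ = Ric_∇̄`, `Ŝ = sym S̄`: suppose `P` is nowhere vanishing, `P` is a Killing
vector field of `g`, and `(U,g)` is Einstein, i.e. `S = c·g` for a constant `c`.  Then at
every point `Ŝ(Y,Z) = (c − (n−2)g(P,P))g(Y,Z) + (n−2)π(Y)π(Z)`; in particular, since
`n−2 ≠ 0` and `π` is nowhere zero, `(U,∇̄)` is a semi-quasi-Einstein manifold. -/
theorem statement3 (n : ℕ) (hn : 3 ≤ n)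
    (U : Set (Fin n → ℝ)) (hU : IsOpen U)
    (g : (Fin n → ℝ) → Fin n → Fin n → ℝ) (hg : SmoothVF U g)
    (hgpos : ∀ x ∈ U, (Matrix.of (g x)).PosDef)
    (P : VF n) (hP : SmoothVF U P)
    (hPne : ∀ x ∈ U, P x ≠ 0)
    (hKilling : ∀ X Y : VF n, SmoothVF U X → SmoothVF U Y → ∀ x ∈ U,
      gval g x (lcCov g X P x) (Y x) + gval g x (lcCov g Y P x) (X x) = 0)
    (c : ℝ)
    (hEinstein : ∀ Y Z : VF n, SmoothVF U Y → SmoothVF U Z → ∀ x ∈ U,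
      ricci (lcCov g) Y Z x = c * gval g x (Y x) (Z x)) :
    (∀ Y Z : VF n, SmoothVF U Y → SmoothVF U Z → ∀ x ∈ U,
      shat g P Y Z x =
        (c - ((n : ℝ) - 2) * gval g x (P x) (P x)) * gval g x (Y x) (Z x)
          + ((n : ℝ) - 2) * (gval g x (Y x) (P x) * gval g x (Z x) (P x))) ∧
      ((n : ℝ) - 2 ≠ 0) ∧
      (∀ x ∈ U, ∃ v : Fin n → ℝ, gval g x v (P x) ≠ 0) := by
  refine ⟨?_, ?_, ?_⟩
  · intro Y Z hY hZ x hx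
    have hkill' : ∀ v w : Fin n → ℝ,
        gval g x (lcCov g (fun _ => v) P x) w + gval g x (lcCov g (fun _ => w) P x) v = 0 := by
      intro v w
      exact hKilling (fun _ => v) (fun _ => w) contDiffOn_const contDiffOn_const x hx
    have hT := T_zero hU hg hgpos hx P hkill'
    have h1 := sbar_eq hU hg hgpos hx hP hY hZ
    have h2 := sbar_eq hU hg hgpos hx hP hZ hY
    have hE1 := hEinstein Y Z hY hZ x hx
    have hE2 := hEinstein Z Y hZ hY x hx
    have hkYZ := hKilling Y Z hY hZ x hx
    have hkk : gval g x (lcCov g Z P x) (Y x) = - gval g x (lcCov g Y P x) (Z x) := by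
      linarith
    unfold shat
    rw [h1, h2, hE1, hE2, hT, hkk]
    rw [gval_symm hgpos hx (Z x) (Y x), gval_symm hgpos hx (P x) (Z x),
      gval_symm hgpos hx (P x) (Y x), gval_symm hgpos hx (Z x) (P x)]
    ring
  · have h3 : (3 : ℝ) ≤ (n : ℝ) := by exact_mod_cast hn
    intro h
    linarith
  · intro x hx
    exact ⟨P x, ne_of_gt (gval_pos hgpos hx (P x) (hPne x hx))⟩
end

section
/- Suppose P is nowhere vanishing, P is a Killing vector field of g (that is, g(∇_X P, Y) + g(∇_Y P, X) = 0 for all vector fields X, Y), and (U, g) is Ricci-flat, i.e. S = 0. Then at every point Ŝ(Y,Z) = −(n−2)g(P,P)·g(Y,Z) + (n−2)·π(Y)π(Z), so (U, ∇̄) is a semi-quasi-Einstein manifold. -/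
open scoped BigOperators

namespace Stmt4

open Finset

variable {n : ℕ} {U : Set (Fin n → ℝ)} {g : (Fin n → ℝ) → Fin n → Fin n → ℝ}
  {P X Y Z A B : VF n} {x : Fin n → ℝ}

/-- the `i`-th constant coordinate field -/
def E (i : Fin n) : VF n := fun _ => Pi.single i 1

lemma smoothE (i : Fin n) : SmoothVF U (E i) := contDiffOn_const

lemma diffAt (hU : IsOpen U) {f : (Fin n → ℝ) → ℝ}
    (hf : ContDiffOn ℝ (⊤ : ℕ∞) f U) (hx : x ∈ U) : DifferentiableAt ℝ f x :=
  (hf.differentiableOn (by simp)).differentiableAt (hU.mem_nhds hx)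

lemma smooth_comp (hf : SmoothVF U Y) (k : Fin n) :
    ContDiffOn ℝ (⊤ : ℕ∞) (fun y => Y y k) U :=
  (ContinuousLinearMap.proj (R := ℝ) (φ := fun _ : Fin n => ℝ) k).contDiff.comp_contDiffOn hf

lemma smooth_entry (hg : SmoothVF U g) (a b : Fin n) :
    ContDiffOn ℝ (⊤ : ℕ∞) (fun y => g y a b) U :=
  ((ContinuousLinearMap.proj (R := ℝ) (φ := fun _ : Fin n => ℝ) b).comp
    (ContinuousLinearMap.proj (R := ℝ) (φ := fun _ : Fin n => Fin n → ℝ) a)).contDiff.comp_contDiffOn hg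

lemma smooth_pd (hU : IsOpen U) {f : (Fin n → ℝ) → ℝ}
    (hf : ContDiffOn ℝ (⊤ : ℕ∞) f U) (i : Fin n) : ContDiffOn ℝ (⊤ : ℕ∞) (pd i f) U := by
  have h1 : ContDiffOn ℝ (⊤ : ℕ∞) (fderiv ℝ f) U := hf.fderiv_of_isOpen hU (by simp)
  exact h1.clm_apply contDiffOn_const

lemma smooth_det {M : (Fin n → ℝ) → Matrix (Fin n) (Fin n) ℝ}
    (hM : ∀ a b, ContDiffOn ℝ (⊤ : ℕ∞) (fun y => M y a b) U) :
    ContDiffOn ℝ (⊤ : ℕ∞) (fun y => (M y).det) U := by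
  simp only [Matrix.det_apply]
  apply ContDiffOn.sum
  intro σ _
  have : ContDiffOn ℝ (⊤ : ℕ∞) (fun y => ∏ i, M y (σ i) i) U := by
    apply contDiffOn_prod (fun i _ => hM (σ i) i)
  simpa [Units.smul_def, zsmul_eq_mul] using this.const_smul ((Equiv.Perm.sign σ : ℤ) : ℝ)

lemma smooth_inv (hU : IsOpen U) (hg : SmoothVF U g)
    (hgpos : ∀ x ∈ U, (Matrix.of (g x)).PosDef) (a b : Fin n) :
    ContDiffOn ℝ (⊤ : ℕ∞) (fun y => (Matrix.of (g y))⁻¹ a b) U := by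
  have hdet : ContDiffOn ℝ (⊤ : ℕ∞) (fun y => (Matrix.of (g y)).det) U :=
    smooth_det (fun a b => smooth_entry hg a b)
  have hdet0 : ∀ y ∈ U, (Matrix.of (g y)).det ≠ 0 := fun y hy => (hgpos y hy).det_pos.ne'
  have hadj : ContDiffOn ℝ (⊤ : ℕ∞) (fun y => (Matrix.of (g y)).adjugate a b) U := by
    simp only [Matrix.adjugate_apply]
    apply smooth_det
    intro c d
    simp only [Matrix.updateRow_apply]
    split_ifs
    · exact contDiffOn_const
    · exact smooth_entry hg c d
  have heq : (fun y => (Matrix.of (g y))⁻¹ a b)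
      = fun y => ((Matrix.of (g y)).det)⁻¹ * (Matrix.of (g y)).adjugate a b := by
    funext y
    rw [Matrix.inv_def]
    simp [Ring.inverse_eq_inv']
  rw [heq]
  exact (hdet.inv hdet0).mul hadj

lemma smooth_christoffel (hU : IsOpen U) (hg : SmoothVF U g)
    (hgpos : ∀ x ∈ U, (Matrix.of (g x)).PosDef) (k i j : Fin n) :
    ContDiffOn ℝ (⊤ : ℕ∞) (fun y => christoffel g y k i j) U := by
  unfold christoffel
  apply ContDiffOn.mul contDiffOn_const
  apply ContDiffOn.sum
  intro l _
  exact (smooth_inv hU hg hgpos k l).mul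
    (((smooth_pd hU (smooth_entry hg j l) i).add (smooth_pd hU (smooth_entry hg i l) j)).sub
      (smooth_pd hU (smooth_entry hg i j) l))

lemma smooth_gval (hg : SmoothVF U g) (hA : SmoothVF U A) (hB : SmoothVF U B) :
    ContDiffOn ℝ (⊤ : ℕ∞) (fun y => gval g y (A y) (B y)) U := by
  unfold gval
  apply ContDiffOn.sum; intro i _
  apply ContDiffOn.sum; intro j _
  exact ((smooth_entry hg i j).mul (smooth_comp hA i)).mul (smooth_comp hB j)

lemma smooth_lcCov (hU : IsOpen U) (hg : SmoothVF U g)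
    (hgpos : ∀ x ∈ U, (Matrix.of (g x)).PosDef)
    (hX : SmoothVF U X) (hY : SmoothVF U Y) (k : Fin n) :
    ContDiffOn ℝ (⊤ : ℕ∞) (fun y => lcCov g X Y y k) U := by
  unfold lcCov
  apply ContDiffOn.add
  · exact ((smooth_comp hY k).fderiv_of_isOpen hU (by simp)).clm_apply hX
  · apply ContDiffOn.sum; intro i _
    apply ContDiffOn.sum; intro j _
    exact ((smooth_christoffel hU hg hgpos k i j).mul (smooth_comp hX i)).mul (smooth_comp hY j)

end Stmt4
namespace Stmt4

variable {n : ℕ} {U : Set (Fin n → ℝ)} {g : (Fin n → ℝ) → Fin n → Fin n → ℝ}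
  {P X Y Z A B : VF n} {x : Fin n → ℝ}

lemma fderiv_dir (f : (Fin n → ℝ) → ℝ) (x v : Fin n → ℝ) :
    fderiv ℝ f x v = ∑ i, v i * fderiv ℝ f x (Pi.single i 1) := by
  have hv : v = ∑ i, v i • (Pi.single i 1 : Fin n → ℝ) := by
    simp only [← Pi.single_smul, smul_eq_mul, mul_one]
    exact (Finset.univ_sum_single v).symm
  conv_lhs => rw [hv]
  rw [map_sum]
  simp [smul_eq_mul]

lemma gsym (hgpos : ∀ x ∈ U, (Matrix.of (g x)).PosDef) (hx : x ∈ U) (a b : Fin n) :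
    g x a b = g x b a := by
  have h := (hgpos x hx).1
  have := congrFun (congrFun h.symm a) b
  simpa [Matrix.conjTranspose_apply] using this

lemma gval_symm (hgpos : ∀ x ∈ U, (Matrix.of (g x)).PosDef) (hx : x ∈ U) (v w : Fin n → ℝ) :
    gval g x v w = gval g x w v := by
  unfold gval
  rw [Finset.sum_comm]
  exact Finset.sum_congr rfl fun i _ => Finset.sum_congr rfl fun j _ => by
    rw [gsym hgpos hx j i]; ring

lemma gval_comb_left (u v w t : Fin n → ℝ) (a b : ℝ) :
    gval g x (fun k => u k + a * v k - b * w k) t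
      = gval g x u t + a * gval g x v t - b * gval g x w t := by
  unfold gval
  have : ∀ i : Fin n, ∑ j, g x i j * (u i + a * v i - b * w i) * t j
      = ∑ j, (g x i j * u i * t j + a * (g x i j * v i * t j) - b * (g x i j * w i * t j)) :=
    fun i => Finset.sum_congr rfl fun j _ => by ring
  simp only [this, Finset.sum_add_distrib, Finset.sum_sub_distrib, ← Finset.mul_sum]

lemma gval_comb_right (t u v w : Fin n → ℝ) (a b : ℝ) :
    gval g x t (fun k => u k + a * v k - b * w k)
      = gval g x t u + a * gval g x t v - b * gval g x t w := by
  unfold gval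
  have : ∀ i : Fin n, ∑ j, g x i j * t i * (u j + a * v j - b * w j)
      = ∑ j, (g x i j * t i * u j + a * (g x i j * t i * v j) - b * (g x i j * t i * w j)) :=
    fun i => Finset.sum_congr rfl fun j _ => by ring
  simp only [this, Finset.sum_add_distrib, Finset.sum_sub_distrib, ← Finset.mul_sum]

lemma gval_sub_left (u v t : Fin n → ℝ) :
    gval g x (fun k => u k - v k) t = gval g x u t - gval g x v t := by
  unfold gval
  have : ∀ i : Fin n, ∑ j, g x i j * (u i - v i) * t j
      = ∑ j, (g x i j * u i * t j - g x i j * v i * t j) :=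
    fun i => Finset.sum_congr rfl fun j _ => by ring
  simp only [this, Finset.sum_sub_distrib]

lemma gval_single_left (i : Fin n) (w : Fin n → ℝ) :
    gval g x (Pi.single i 1) w = ∑ b, g x i b * w b := by
  unfold gval
  rw [Finset.sum_comm]
  simp [Pi.single_apply, Finset.mul_sum, mul_ite, ite_mul, Finset.sum_comm]

lemma sumG (v w : Fin n → ℝ) :
    ∑ i, v i * gval g x (Pi.single i 1) w = gval g x v w := by
  simp only [gval_single_left]
  unfold gval
  exact Finset.sum_congr rfl fun i _ => by rw [Finset.mul_sum]; exact Finset.sum_congr rfl fun j _ => by ring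

lemma gval_linear_right (t : Fin n → ℝ) (c : Fin n → ℝ) (u : Fin n → Fin n → ℝ) :
    gval g x t (fun k => ∑ i, c i * u i k) = ∑ i, c i * gval g x t (u i) := by
  unfold gval
  have h1 : ∀ a : Fin n, ∑ b, g x a b * t a * (∑ i, c i * u i b)
      = ∑ i, c i * ∑ b, g x a b * t a * u i b := by
    intro a
    calc ∑ b, g x a b * t a * (∑ i, c i * u i b)
        = ∑ b, ∑ i, c i * (g x a b * t a * u i b) := Finset.sum_congr rfl fun b _ => by
            rw [Finset.mul_sum]; exact Finset.sum_congr rfl fun i _ => by ring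
      _ = ∑ i, ∑ b, c i * (g x a b * t a * u i b) := Finset.sum_comm
      _ = ∑ i, c i * ∑ b, g x a b * t a * u i b := Finset.sum_congr rfl fun i _ => (Finset.mul_sum ..).symm
  simp only [h1]
  rw [Finset.sum_comm]
  exact Finset.sum_congr rfl fun i _ => by rw [Finset.mul_sum]

lemma gval_linear_left (t : Fin n → ℝ) (c : Fin n → ℝ) (u : Fin n → Fin n → ℝ) :
    gval g x (fun k => ∑ i, c i * u i k) t = ∑ i, c i * gval g x (u i) t := by
  unfold gval
  have h1 : ∀ a : Fin n, ∑ b, g x a b * (∑ i, c i * u i a) * t b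
      = ∑ i, c i * ∑ b, g x a b * u i a * t b := by
    intro a
    calc ∑ b, g x a b * (∑ i, c i * u i a) * t b
        = ∑ b, ∑ i, c i * (g x a b * u i a * t b) := Finset.sum_congr rfl fun b _ => by
            rw [Finset.mul_sum, Finset.sum_mul]; exact Finset.sum_congr rfl fun i _ => by ring
      _ = ∑ i, ∑ b, c i * (g x a b * u i a * t b) := Finset.sum_comm
      _ = ∑ i, c i * ∑ b, g x a b * u i a * t b := Finset.sum_congr rfl fun i _ => (Finset.mul_sum ..).symm
  simp only [h1]
  rw [Finset.sum_comm]
  exact Finset.sum_congr rfl fun i _ => by rw [Finset.mul_sum]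

end Stmt4
namespace Stmt4

variable {n : ℕ} {U : Set (Fin n → ℝ)} {g : (Fin n → ℝ) → Fin n → Fin n → ℝ}
  {P X Y Z A B : VF n} {x : Fin n → ℝ}

lemma pd_symm (hU : IsOpen U) (hgpos : ∀ x ∈ U, (Matrix.of (g x)).PosDef)
    (hx : x ∈ U) (i a b : Fin n) :
    pd i (fun y => g y b a) x = pd i (fun y => g y a b) x := by
  unfold pd
  congr 1
  apply Filter.EventuallyEq.fderiv_eq
  filter_upwards [hU.mem_nhds hx] with y hy
  exact gsym hgpos hy b a

lemma gmul_inv (hgpos : ∀ x ∈ U, (Matrix.of (g x)).PosDef) (hx : x ∈ U) (m p : Fin n) :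
    (∑ l, g x m l * (Matrix.of (g x))⁻¹ l p) = if m = p then 1 else 0 := by
  have h := Matrix.mul_nonsing_inv (Matrix.of (g x)) (hgpos x hx).det_pos.ne'.isUnit
  have h2 := congrFun (congrFun h m) p
  simpa [Matrix.mul_apply, Matrix.one_apply] using h2

lemma inv_symm (hgpos : ∀ x ∈ U, (Matrix.of (g x)).PosDef) (hx : x ∈ U) (a b : Fin n) :
    (Matrix.of (g x))⁻¹ a b = (Matrix.of (g x))⁻¹ b a := by
  have h := ((hgpos x hx).1.inv)
  have := congrFun (congrFun h.symm a) b
  simpa [Matrix.conjTranspose_apply] using this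

lemma lowered (hgpos : ∀ x ∈ U, (Matrix.of (g x)).PosDef) (hx : x ∈ U) (m i j : Fin n) :
    ∑ l, g x m l * christoffel g x l i j
      = (1/2) * (pd i (fun y => g y j m) x + pd j (fun y => g y i m) x
          - pd m (fun y => g y i j) x) := by
  unfold christoffel
  have step1 : ∀ l : Fin n, g x m l * ((1/2) * ∑ p, (Matrix.of (g x))⁻¹ l p *
      (pd i (fun y => g y j p) x + pd j (fun y => g y i p) x - pd p (fun y => g y i j) x))
      = ∑ p, (1/2) * (g x m l * (Matrix.of (g x))⁻¹ l p) *
      (pd i (fun y => g y j p) x + pd j (fun y => g y i p) x - pd p (fun y => g y i j) x) := by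
    intro l
    rw [Finset.mul_sum, Finset.mul_sum]
    exact Finset.sum_congr rfl fun p _ => by ring
  simp only [step1]
  rw [Finset.sum_comm]
  have step2 : ∀ p : Fin n, ∑ l, (1/2) * (g x m l * (Matrix.of (g x))⁻¹ l p) *
      (pd i (fun y => g y j p) x + pd j (fun y => g y i p) x - pd p (fun y => g y i j) x)
      = (1/2) * (if m = p then 1 else 0) *
      (pd i (fun y => g y j p) x + pd j (fun y => g y i p) x - pd p (fun y => g y i j) x) := by
    intro p
    rw [← gmul_inv hgpos hx m p, Finset.mul_sum, Finset.sum_mul]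
  simp only [step2]
  simp [Finset.sum_ite_eq, ite_mul]

lemma pd_g (hU : IsOpen U) (hgpos : ∀ x ∈ U, (Matrix.of (g x)).PosDef)
    (hx : x ∈ U) (i a b : Fin n) :
    pd i (fun y => g y a b) x
      = ∑ l, (g x l b * christoffel g x l i a + g x a l * christoffel g x l i b) := by
  rw [Finset.sum_add_distrib]
  have h1 : ∑ l, g x l b * christoffel g x l i a = ∑ l, g x b l * christoffel g x l i a :=
    Finset.sum_congr rfl fun l _ => by rw [gsym hgpos hx l b]
  rw [h1, lowered hgpos hx b i a, lowered hgpos hx a i b]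
  rw [pd_symm hU hgpos hx i a b]
  ring

lemma christoffel_symm (hU : IsOpen U) (hgpos : ∀ x ∈ U, (Matrix.of (g x)).PosDef)
    (hx : x ∈ U) (k i j : Fin n) :
    christoffel g x k i j = christoffel g x k j i := by
  unfold christoffel
  congr 1
  apply Finset.sum_congr rfl
  intro l _
  rw [pd_symm hU hgpos hx l j i]
  ring

end Stmt4
namespace Stmt4

variable {n : ℕ} {U : Set (Fin n → ℝ)} {g : (Fin n → ℝ) → Fin n → Fin n → ℝ}
  {P X Y Z A B : VF n} {x : Fin n → ℝ}

lemma sum2_congr {f h : Fin n → Fin n → ℝ} (H : ∀ a b, f a b = h a b) :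
    ∑ a, ∑ b, f a b = ∑ a, ∑ b, h a b :=
  Finset.sum_congr rfl fun a _ => Finset.sum_congr rfl fun b _ => H a b

lemma sum4_congr {f h : Fin n → Fin n → Fin n → Fin n → ℝ}
    (H : ∀ a b c d, f a b c d = h a b c d) :
    ∑ a, ∑ b, ∑ c, ∑ d, f a b c d = ∑ a, ∑ b, ∑ c, ∑ d, h a b c d :=
  Finset.sum_congr rfl fun a _ => Finset.sum_congr rfl fun b _ =>
    Finset.sum_congr rfl fun c _ => Finset.sum_congr rfl fun d _ => H a b c d

lemma sum3_comm (f : Fin n → Fin n → Fin n → ℝ) :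
    ∑ b, ∑ i, ∑ l, f b i l = ∑ l, ∑ i, ∑ b, f b i l := by
  calc ∑ b, ∑ i, ∑ l, f b i l
      = ∑ b, ∑ l, ∑ i, f b i l := Finset.sum_congr rfl fun b _ => Finset.sum_comm
    _ = ∑ l, ∑ b, ∑ i, f b i l := Finset.sum_comm
    _ = ∑ l, ∑ i, ∑ b, f b i l := Finset.sum_congr rfl fun l _ => Finset.sum_comm

lemma sum4_comm (f : Fin n → Fin n → Fin n → Fin n → ℝ) :
    ∑ a, ∑ b, ∑ i, ∑ l, f a b i l = ∑ l, ∑ b, ∑ i, ∑ a, f a b i l := by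
  calc ∑ a, ∑ b, ∑ i, ∑ l, f a b i l
      = ∑ a, ∑ l, ∑ i, ∑ b, f a b i l :=
        Finset.sum_congr rfl fun a _ => sum3_comm _
    _ = ∑ l, ∑ a, ∑ i, ∑ b, f a b i l := Finset.sum_comm
    _ = ∑ l, ∑ b, ∑ i, ∑ a, f a b i l :=
        Finset.sum_congr rfl fun l _ => sum3_comm _

lemma sum4_comm' (f : Fin n → Fin n → Fin n → Fin n → ℝ) :
    ∑ a, ∑ b, ∑ i, ∑ l, f a b i l = ∑ a, ∑ l, ∑ i, ∑ b, f a b i l :=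
  Finset.sum_congr rfl fun a _ => sum3_comm _

lemma mul_sum2 (p : ℝ) (t : Fin n → Fin n → ℝ) :
    p * ∑ c, ∑ d, t c d = ∑ c, ∑ d, p * t c d := by
  rw [Finset.mul_sum]
  exact Finset.sum_congr rfl fun c _ => Finset.mul_sum ..

lemma mul_sum2_mul (p q : ℝ) (t : Fin n → Fin n → ℝ) :
    p * (∑ c, ∑ d, t c d) * q = ∑ c, ∑ d, p * t c d * q := by
  rw [Finset.mul_sum, Finset.sum_mul]
  exact Finset.sum_congr rfl fun c _ => by rw [Finset.mul_sum, Finset.sum_mul]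

lemma push_sum2 (c : ℝ) (v : Fin n → ℝ) (w : Fin n → Fin n → ℝ) :
    c * ∑ i, v i * ∑ l, w i l = ∑ i, ∑ l, c * v i * w i l := by
  rw [Finset.mul_sum]
  apply Finset.sum_congr rfl; intro i _
  rw [← mul_assoc, Finset.mul_sum]

lemma lcCov_single (i k : Fin n) (Y : VF n) :
    lcCov g (E i) Y x k
      = fderiv ℝ (fun y => Y y k) x (Pi.single i 1) + ∑ b, christoffel g x k i b * Y x b := by
  unfold lcCov E
  congr 1
  have h1 : ∀ a : Fin n, ∑ b, christoffel g x k a b * (Pi.single i 1 : Fin n → ℝ) a * Y x b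
      = if a = i then ∑ b, christoffel g x k a b * Y x b else 0 := by
    intro a
    by_cases h : a = i
    · subst h; simp
    · simp [Pi.single_apply, h]
  simp only [h1]
  simp

lemma lcCov_linear (X Y : VF n) (k : Fin n) :
    lcCov g X Y x k = ∑ i, X x i * lcCov g (E i) Y x k := by
  simp only [lcCov_single]
  unfold lcCov
  rw [fderiv_dir (fun y => Y y k) x (X x)]
  have h2 : ∀ a : Fin n, ∑ b, christoffel g x k a b * X x a * Y x b
      = X x a * ∑ b, christoffel g x k a b * Y x b := by
    intro a
    rw [Finset.mul_sum]
    exact Finset.sum_congr rfl fun b _ => by ring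
  simp only [h2]
  rw [← Finset.sum_add_distrib]
  exact Finset.sum_congr rfl fun i _ => by ring

/-- Leibniz-type rule for `lcCov` applied to `W + f·A − h·B`. -/
lemma lcCov_comb (X W A' B' : VF n) (f h : (Fin n → ℝ) → ℝ) (k : Fin n)
    (hW : DifferentiableAt ℝ (fun y => W y k) x)
    (hA : DifferentiableAt ℝ (fun y => A' y k) x)
    (hB : DifferentiableAt ℝ (fun y => B' y k) x)
    (hf : DifferentiableAt ℝ f x) (hh : DifferentiableAt ℝ h x) :
    lcCov g X (fun y j => W y j + f y * A' y j - h y * B' y j) x k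
      = lcCov g X W x k + (fderiv ℝ f x (X x) * A' x k + f x * lcCov g X A' x k)
        - (fderiv ℝ h x (X x) * B' x k + h x * lcCov g X B' x k) := by
  unfold lcCov
  have hd : fderiv ℝ (fun y => W y k + f y * A' y k - h y * B' y k) x (X x)
      = fderiv ℝ (fun y => W y k) x (X x)
        + (fderiv ℝ f x (X x) * A' x k + f x * fderiv ℝ (fun y => A' y k) x (X x))
        - (fderiv ℝ h x (X x) * B' x k + h x * fderiv ℝ (fun y => B' y k) x (X x)) := by
    rw [fderiv_fun_sub (f := fun y => W y k + f y * A' y k) (g := fun y => h y * B' y k)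
        (hW.add (hf.mul hA)) (hh.mul hB),
      fderiv_fun_add (f := fun y => W y k) (g := fun y => f y * A' y k) hW (hf.mul hA),
      fderiv_fun_mul hf hA, fderiv_fun_mul hh hB]
    simp only [ContinuousLinearMap.sub_apply, ContinuousLinearMap.add_apply,
      ContinuousLinearMap.smul_apply, smul_eq_mul]
    ring
  rw [hd]
  have hg2 : ∀ a : Fin n, ∑ b, christoffel g x k a b * X x a *
        (W x b + f x * A' x b - h x * B' x b)
      = ∑ b, (christoffel g x k a b * X x a * W x b
          + f x * (christoffel g x k a b * X x a * A' x b)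
          - h x * (christoffel g x k a b * X x a * B' x b)) :=
    fun a => Finset.sum_congr rfl fun b _ => by ring
  simp only [hg2, Finset.sum_add_distrib, Finset.sum_sub_distrib, ← Finset.mul_sum]
  ring

/-- Metric compatibility of the Levi-Civita connection. -/
lemma compat (hU : IsOpen U) (hg : SmoothVF U g)
    (hgpos : ∀ x ∈ U, (Matrix.of (g x)).PosDef) (hx : x ∈ U)
    (hA : SmoothVF U A) (hB : SmoothVF U B) (v : Fin n → ℝ) :
    fderiv ℝ (fun y => gval g y (A y) (B y)) x v
      = gval g x (lcCov g (fun _ => v) A x) (B x)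
        + gval g x (A x) (lcCov g (fun _ => v) B x) := by
  have hsum : HasFDerivAt (fun y => ∑ a, ∑ b, g y a b * A y a * B y b)
      (∑ a, ∑ b, ((g x a b * A x a) • fderiv ℝ (fun y => B y b) x
        + B x b • (g x a b • fderiv ℝ (fun y => A y a) x
          + A x a • fderiv ℝ (fun y => g y a b) x))) x := by
    apply HasFDerivAt.fun_sum; intro a _
    apply HasFDerivAt.fun_sum; intro b _
    exact ((diffAt hU (smooth_entry hg a b) hx).hasFDerivAt.mul
      (diffAt hU (smooth_comp hA a) hx).hasFDerivAt).mul
      (diffAt hU (smooth_comp hB b) hx).hasFDerivAt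
  have hF : fderiv ℝ (fun y => gval g y (A y) (B y)) x v
      = ∑ a, ∑ b, (g x a b * A x a * fderiv ℝ (fun y => B y b) x v
          + B x b * (g x a b * fderiv ℝ (fun y => A y a) x v
            + A x a * fderiv ℝ (fun y => g y a b) x v)) := by
    have he : (fun y => gval g y (A y) (B y)) = fun y => ∑ a, ∑ b, g y a b * A y a * B y b := rfl
    rw [he, hsum.fderiv]
    simp only [ContinuousLinearMap.coe_sum', Finset.sum_apply,
      ContinuousLinearMap.add_apply, ContinuousLinearMap.smul_apply, smul_eq_mul]
  rw [hF]
  have hRA : gval g x (lcCov g (fun _ => v) A x) (B x)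
      = (∑ a, ∑ b, g x a b * fderiv ℝ (fun y => A y a) x v * B x b)
        + ∑ a, ∑ b, ∑ c, ∑ d,
            g x a b * christoffel g x a c d * v c * A x d * B x b := by
    show (∑ a, ∑ b, g x a b * lcCov g (fun _ => v) A x a * B x b) = _
    rw [← Finset.sum_add_distrib]
    apply Finset.sum_congr rfl; intro a _
    rw [← Finset.sum_add_distrib]
    apply Finset.sum_congr rfl; intro b _
    show g x a b * (fderiv ℝ (fun y => A y a) x v
        + ∑ c, ∑ d, christoffel g x a c d * v c * A x d) * B x b = _
    rw [mul_add, add_mul, mul_sum2_mul]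
    congr 1
    exact sum2_congr fun c d => by ring
  have hRB : gval g x (A x) (lcCov g (fun _ => v) B x)
      = (∑ a, ∑ b, g x a b * A x a * fderiv ℝ (fun y => B y b) x v)
        + ∑ a, ∑ b, ∑ c, ∑ d,
            g x a b * A x a * christoffel g x b c d * v c * B x d := by
    show (∑ a, ∑ b, g x a b * A x a * lcCov g (fun _ => v) B x b) = _
    rw [← Finset.sum_add_distrib]
    apply Finset.sum_congr rfl; intro a _
    rw [← Finset.sum_add_distrib]
    apply Finset.sum_congr rfl; intro b _
    show g x a b * A x a * (fderiv ℝ (fun y => B y b) x v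
        + ∑ c, ∑ d, christoffel g x b c d * v c * B x d) = _
    rw [mul_add, mul_sum2]
    congr 1
    exact sum2_congr fun c d => by ring
  rw [hRA, hRB]
  have hL : ∑ a, ∑ b, (g x a b * A x a * fderiv ℝ (fun y => B y b) x v
          + B x b * (g x a b * fderiv ℝ (fun y => A y a) x v
            + A x a * fderiv ℝ (fun y => g y a b) x v))
      = (∑ a, ∑ b, g x a b * fderiv ℝ (fun y => A y a) x v * B x b)
        + (∑ a, ∑ b, g x a b * A x a * fderiv ℝ (fun y => B y b) x v)
        + ((∑ a, ∑ b, ∑ i, ∑ l,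
            v i * (g x l b * christoffel g x l i a) * A x a * B x b)
          + ∑ a, ∑ b, ∑ i, ∑ l,
            v i * (g x a l * christoffel g x l i b) * A x a * B x b) := by
    have perab : ∀ a b : Fin n,
        g x a b * A x a * fderiv ℝ (fun y => B y b) x v
          + B x b * (g x a b * fderiv ℝ (fun y => A y a) x v
            + A x a * fderiv ℝ (fun y => g y a b) x v)
        = g x a b * fderiv ℝ (fun y => A y a) x v * B x b
          + g x a b * A x a * fderiv ℝ (fun y => B y b) x v
          + ((∑ i, ∑ l, v i * (g x l b * christoffel g x l i a) * A x a * B x b)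
            + ∑ i, ∑ l, v i * (g x a l * christoffel g x l i b) * A x a * B x b) := by
      intro a b
      rw [fderiv_dir (fun y => g y a b) x v]
      have hpd : ∀ i : Fin n, fderiv ℝ (fun y => g y a b) x (Pi.single i 1)
          = ∑ l, (g x l b * christoffel g x l i a + g x a l * christoffel g x l i b) :=
        fun i => pd_g hU hgpos hx i a b
      simp only [hpd]
      have h3 : A x a * B x b * ∑ i, v i * ∑ l,
          (g x l b * christoffel g x l i a + g x a l * christoffel g x l i b)
          = (∑ i, ∑ l, v i * (g x l b * christoffel g x l i a) * A x a * B x b)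
            + ∑ i, ∑ l, v i * (g x a l * christoffel g x l i b) * A x a * B x b := by
        rw [push_sum2, ← Finset.sum_add_distrib]
        apply Finset.sum_congr rfl; intro i _
        rw [← Finset.sum_add_distrib]
        exact Finset.sum_congr rfl fun l _ => by ring
      rw [← h3]
      ring
    calc ∑ a, ∑ b, (g x a b * A x a * fderiv ℝ (fun y => B y b) x v
          + B x b * (g x a b * fderiv ℝ (fun y => A y a) x v
            + A x a * fderiv ℝ (fun y => g y a b) x v))
        = ∑ a, ∑ b, (g x a b * fderiv ℝ (fun y => A y a) x v * B x b
          + g x a b * A x a * fderiv ℝ (fun y => B y b) x v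
          + ((∑ i, ∑ l, v i * (g x l b * christoffel g x l i a) * A x a * B x b)
            + ∑ i, ∑ l, v i * (g x a l * christoffel g x l i b) * A x a * B x b)) :=
          sum2_congr perab
      _ = _ := by simp only [Finset.sum_add_distrib]
  rw [hL]
  have hT1 : (∑ a, ∑ b, ∑ i, ∑ l,
        v i * (g x l b * christoffel g x l i a) * A x a * B x b)
      = ∑ a, ∑ b, ∑ c, ∑ d,
        g x a b * christoffel g x a c d * v c * A x d * B x b := by
    rw [sum4_comm]
    exact sum4_congr fun l b i a => by ring
  have hT2 : (∑ a, ∑ b, ∑ i, ∑ l,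
        v i * (g x a l * christoffel g x l i b) * A x a * B x b)
      = ∑ a, ∑ b, ∑ c, ∑ d,
        g x a b * A x a * christoffel g x b c d * v c * B x d := by
    rw [sum4_comm']
    exact sum4_congr fun a l i b => by ring
  rw [hT1, hT2]
  ring

end Stmt4
namespace Stmt4

variable {n : ℕ} {U : Set (Fin n → ℝ)} {g : (Fin n → ℝ) → Fin n → Fin n → ℝ}
  {P X Y Z A B : VF n} {x : Fin n → ℝ}

lemma lcCov_constfield (i k : Fin n) (Y : VF n) :
    lcCov g Y (E i) x k = ∑ a, christoffel g x k a i * Y x a := by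
  unfold lcCov E
  have h0 : fderiv ℝ (fun _ : Fin n → ℝ => (Pi.single i 1 : Fin n → ℝ) k) x (Y x) = 0 := by
    simp
  rw [h0]
  have h1 : ∀ a : Fin n, ∑ b, christoffel g x k a b * Y x a * (Pi.single i 1 : Fin n → ℝ) b
      = christoffel g x k a i * Y x a := by
    intro a
    have h2 : ∀ b : Fin n, christoffel g x k a b * Y x a * (Pi.single i 1 : Fin n → ℝ) b
        = if b = i then christoffel g x k a i * Y x a else 0 := by
      intro b
      by_cases h : b = i
      · subst h; simp
      · simp [Pi.single_apply, h]
    simp only [h2]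
    simp
  simp only [h1, zero_add]

lemma torsion (hU : IsOpen U) (hgpos : ∀ x ∈ U, (Matrix.of (g x)).PosDef) (hx : x ∈ U)
    (i k : Fin n) (Y : VF n) :
    lie (E i) Y x k = lcCov g (E i) Y x k - lcCov g Y (E i) x k := by
  rw [lcCov_single, lcCov_constfield]
  have hlie : lie (E i) Y x k = fderiv ℝ (fun y => Y y k) x (Pi.single i 1) := by
    unfold lie E
    simp
  rw [hlie]
  have h3 : (∑ b, christoffel g x k i b * Y x b) = ∑ a, christoffel g x k a i * Y x a :=
    Finset.sum_congr rfl fun b _ => by rw [christoffel_symm hU hgpos hx k i b]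
  rw [h3]
  ring

section Terms

variable (hU : IsOpen U) (hg : SmoothVF U g)
  (hgpos : ∀ x ∈ U, (Matrix.of (g x)).PosDef)
  (hP : SmoothVF U P) (hY : SmoothVF U Y) (hZ : SmoothVF U Z) (hx : x ∈ U)

include hU hg hgpos hP hY hZ hx in
lemma term1 (i k : Fin n) :
    ssCov g P (E i) (ssCov g P Y Z) x k
      = lcCov g (E i) (lcCov g Y Z) x k
        + (gval g x (lcCov g (E i) Z x) (P x) + gval g x (Z x) (lcCov g (E i) P x)) * Y x k
        + gval g x (Z x) (P x) * lcCov g (E i) Y x k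
        - (gval g x (lcCov g (E i) Y x) (Z x) + gval g x (Y x) (lcCov g (E i) Z x)) * P x k
        - gval g x (Y x) (Z x) * lcCov g (E i) P x k
        + (gval g x (lcCov g Y Z x) (P x) + gval g x (Z x) (P x) * gval g x (Y x) (P x)
            - gval g x (Y x) (Z x) * gval g x (P x) (P x)) * (Pi.single i 1 : Fin n → ℝ) k
        - (gval g x (Pi.single i 1) (lcCov g Y Z x)
            + gval g x (Z x) (P x) * gval g x (Pi.single i 1) (Y x)
            - gval g x (Y x) (Z x) * gval g x (Pi.single i 1) (P x)) * P x k := by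
  have e1 : ssCov g P (E i) (ssCov g P Y Z) x k
      = lcCov g (E i) (ssCov g P Y Z) x k
        + gval g x (ssCov g P Y Z x) (P x) * (Pi.single i 1 : Fin n → ℝ) k
        - gval g x (Pi.single i 1) (ssCov g P Y Z x) * P x k := rfl
  have e2 : lcCov g (E i) (ssCov g P Y Z) x k
      = lcCov g (E i) (lcCov g Y Z) x k
        + (fderiv ℝ (fun y => gval g y (Z y) (P y)) x (Pi.single i 1) * Y x k
          + gval g x (Z x) (P x) * lcCov g (E i) Y x k)
        - (fderiv ℝ (fun y => gval g y (Y y) (Z y)) x (Pi.single i 1) * P x k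
          + gval g x (Y x) (Z x) * lcCov g (E i) P x k) :=
    lcCov_comb (E i) (lcCov g Y Z) Y P (fun y => gval g y (Z y) (P y))
      (fun y => gval g y (Y y) (Z y)) k
      (diffAt hU (smooth_lcCov hU hg hgpos hY hZ k) hx)
      (diffAt hU (smooth_comp hY k) hx)
      (diffAt hU (smooth_comp hP k) hx)
      (diffAt hU (smooth_gval hg hZ hP) hx)
      (diffAt hU (smooth_gval hg hY hZ) hx)
  have e3 : fderiv ℝ (fun y => gval g y (Z y) (P y)) x (Pi.single i 1)
      = gval g x (lcCov g (E i) Z x) (P x) + gval g x (Z x) (lcCov g (E i) P x) :=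
    compat hU hg hgpos hx hZ hP (Pi.single i 1)
  have e4 : fderiv ℝ (fun y => gval g y (Y y) (Z y)) x (Pi.single i 1)
      = gval g x (lcCov g (E i) Y x) (Z x) + gval g x (Y x) (lcCov g (E i) Z x) :=
    compat hU hg hgpos hx hY hZ (Pi.single i 1)
  have e5 : gval g x (ssCov g P Y Z x) (P x)
      = gval g x (lcCov g Y Z x) (P x)
        + gval g x (Z x) (P x) * gval g x (Y x) (P x)
        - gval g x (Y x) (Z x) * gval g x (P x) (P x) :=
    gval_comb_left (lcCov g Y Z x) (Y x) (P x) (P x) _ _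
  have e6 : gval g x (Pi.single i 1) (ssCov g P Y Z x)
      = gval g x (Pi.single i 1) (lcCov g Y Z x)
        + gval g x (Z x) (P x) * gval g x (Pi.single i 1) (Y x)
        - gval g x (Y x) (Z x) * gval g x (Pi.single i 1) (P x) :=
    gval_comb_right (Pi.single i 1) (lcCov g Y Z x) (Y x) (P x) _ _
  rw [e1, e2, e3, e4, e5, e6]
  ring

include hU hg hgpos hP hY hZ hx in
lemma term2 (i k : Fin n) :
    ssCov g P Y (ssCov g P (E i) Z) x k
      = lcCov g Y (lcCov g (E i) Z) x k
        + (gval g x (lcCov g Y Z x) (P x) + gval g x (Z x) (lcCov g Y P x))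
            * (Pi.single i 1 : Fin n → ℝ) k
        + gval g x (Z x) (P x) * lcCov g Y (E i) x k
        - (gval g x (lcCov g Y (E i) x) (Z x) + gval g x (Pi.single i 1) (lcCov g Y Z x)) * P x k
        - gval g x (Pi.single i 1) (Z x) * lcCov g Y P x k
        + (gval g x (lcCov g (E i) Z x) (P x)
            + gval g x (Z x) (P x) * gval g x (Pi.single i 1) (P x)
            - gval g x (Pi.single i 1) (Z x) * gval g x (P x) (P x)) * Y x k
        - (gval g x (Y x) (lcCov g (E i) Z x)
            + gval g x (Z x) (P x) * gval g x (Pi.single i 1) (Y x)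
            - gval g x (Pi.single i 1) (Z x) * gval g x (Y x) (P x)) * P x k := by
  have e1 : ssCov g P Y (ssCov g P (E i) Z) x k
      = lcCov g Y (ssCov g P (E i) Z) x k
        + gval g x (ssCov g P (E i) Z x) (P x) * Y x k
        - gval g x (Y x) (ssCov g P (E i) Z x) * P x k := rfl
  have e2 : lcCov g Y (ssCov g P (E i) Z) x k
      = lcCov g Y (lcCov g (E i) Z) x k
        + (fderiv ℝ (fun y => gval g y (Z y) (P y)) x (Y x) * (Pi.single i 1 : Fin n → ℝ) k
          + gval g x (Z x) (P x) * lcCov g Y (E i) x k)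
        - (fderiv ℝ (fun y => gval g y (Pi.single i 1) (Z y)) x (Y x) * P x k
          + gval g x (Pi.single i 1) (Z x) * lcCov g Y P x k) :=
    lcCov_comb Y (lcCov g (E i) Z) (E i) P (fun y => gval g y (Z y) (P y))
      (fun y => gval g y (Pi.single i 1) (Z y)) k
      (diffAt hU (smooth_lcCov hU hg hgpos (smoothE i) hZ k) hx)
      (differentiableAt_const _)
      (diffAt hU (smooth_comp hP k) hx)
      (diffAt hU (smooth_gval hg hZ hP) hx)
      (diffAt hU (smooth_gval hg (smoothE i) hZ) hx)
  have e3 : fderiv ℝ (fun y => gval g y (Z y) (P y)) x (Y x)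
      = gval g x (lcCov g Y Z x) (P x) + gval g x (Z x) (lcCov g Y P x) :=
    compat hU hg hgpos hx hZ hP (Y x)
  have e4 : fderiv ℝ (fun y => gval g y (Pi.single i 1) (Z y)) x (Y x)
      = gval g x (lcCov g Y (E i) x) (Z x) + gval g x (Pi.single i 1) (lcCov g Y Z x) :=
    compat hU hg hgpos hx (smoothE i) hZ (Y x)
  have e5 : gval g x (ssCov g P (E i) Z x) (P x)
      = gval g x (lcCov g (E i) Z x) (P x)
        + gval g x (Z x) (P x) * gval g x (Pi.single i 1) (P x)
        - gval g x (Pi.single i 1) (Z x) * gval g x (P x) (P x) :=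
    gval_comb_left (lcCov g (E i) Z x) (Pi.single i 1) (P x) (P x) _ _
  have e6 : gval g x (Y x) (ssCov g P (E i) Z x)
      = gval g x (Y x) (lcCov g (E i) Z x)
        + gval g x (Z x) (P x) * gval g x (Y x) (Pi.single i 1)
        - gval g x (Pi.single i 1) (Z x) * gval g x (Y x) (P x) :=
    gval_comb_right (Y x) (lcCov g (E i) Z x) (Pi.single i 1) (P x) _ _
  rw [e1, e2, e3, e4, e5, e6, gval_symm hgpos hx (Y x) (Pi.single i 1)]
  ring

include hU hgpos hx in
lemma term3 (i k : Fin n) :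
    ssCov g P (lie (E i) Y) Z x k
      = lcCov g (lie (E i) Y) Z x k
        + gval g x (Z x) (P x) * (lcCov g (E i) Y x k - lcCov g Y (E i) x k)
        - (gval g x (lcCov g (E i) Y x) (Z x) - gval g x (lcCov g Y (E i) x) (Z x)) * P x k := by
  have e1 : ssCov g P (lie (E i) Y) Z x k
      = lcCov g (lie (E i) Y) Z x k
        + gval g x (Z x) (P x) * lie (E i) Y x k
        - gval g x (lie (E i) Y x) (Z x) * P x k := rfl
  have e2 : lie (E i) Y x = fun k => lcCov g (E i) Y x k - lcCov g Y (E i) x k :=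
    funext fun k => torsion hU hgpos hx i k Y
  rw [e1, e2, gval_sub_left]

include hU hg hgpos hP hY hZ hx in
lemma curv_diff (i k : Fin n) :
    curv (ssCov g P) (E i) Y Z x k
      = curv (lcCov g) (E i) Y Z x k
        + (gval g x (Z x) (lcCov g (E i) P x) * Y x k
          - gval g x (Y x) (Z x) * lcCov g (E i) P x k
          + (gval g x (Z x) (P x) * gval g x (Y x) (P x)
            - gval g x (Y x) (Z x) * gval g x (P x) (P x)
            - gval g x (Z x) (lcCov g Y P x)) * (Pi.single i 1 : Fin n → ℝ) k
          + gval g x (Y x) (Z x) * gval g x (Pi.single i 1) (P x) * P x k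
          - gval g x (Z x) (P x) * gval g x (Pi.single i 1) (P x) * Y x k
          + gval g x (Pi.single i 1) (Z x) * gval g x (P x) (P x) * Y x k
          - gval g x (Pi.single i 1) (Z x) * gval g x (Y x) (P x) * P x k
          + gval g x (Pi.single i 1) (Z x) * lcCov g Y P x k) := by
  have hc1 : curv (ssCov g P) (E i) Y Z x k
      = ssCov g P (E i) (ssCov g P Y Z) x k - ssCov g P Y (ssCov g P (E i) Z) x k
        - ssCov g P (lie (E i) Y) Z x k := rfl
  have hc2 : curv (lcCov g) (E i) Y Z x k
      = lcCov g (E i) (lcCov g Y Z) x k - lcCov g Y (lcCov g (E i) Z) x k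
        - lcCov g (lie (E i) Y) Z x k := rfl
  rw [hc1, hc2, term1 hU hg hgpos hP hY hZ hx i k, term2 hU hg hgpos hP hY hZ hx i k,
    term3 hU hgpos hx i k]
  ring

end Terms

end Stmt4
namespace Stmt4

variable {n : ℕ} {U : Set (Fin n → ℝ)} {g : (Fin n → ℝ) → Fin n → Fin n → ℝ}
  {P X Y Z A B : VF n} {x : Fin n → ℝ}

/-- The key Ricci-tensor comparison for the semi-symmetric metric connection. -/
lemma ricci_diff (hU : IsOpen U) (hg : SmoothVF U g)
    (hgpos : ∀ x ∈ U, (Matrix.of (g x)).PosDef)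
    (hP : SmoothVF U P) (hY : SmoothVF U Y) (hZ : SmoothVF U Z) (hx : x ∈ U) :
    ricci (ssCov g P) Y Z x
      = ricci (lcCov g) Y Z x
        + (2 - (n:ℝ)) * gval g x (Z x) (lcCov g Y P x)
        - (∑ j, lcCov g (E j) P x j) * gval g x (Y x) (Z x)
        + ((n:ℝ) - 2) * (gval g x (Y x) (P x) * gval g x (Z x) (P x))
        - ((n:ℝ) - 2) * (gval g x (P x) (P x) * gval g x (Y x) (Z x)) := by
  have h0 : ricci (ssCov g P) Y Z x = ∑ i, curv (ssCov g P) (E i) Y Z x i := rfl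
  have h0' : ricci (lcCov g) Y Z x = ∑ i, curv (lcCov g) (E i) Y Z x i := rfl
  rw [h0, h0']
  rw [Finset.sum_congr rfl fun i (_ : i ∈ Finset.univ) => curv_diff hU hg hgpos hP hY hZ hx i i]
  rw [Finset.sum_add_distrib]
  simp only [Finset.sum_add_distrib, Finset.sum_sub_distrib]
  have e1 : ∑ i, gval g x (Z x) (lcCov g (E i) P x) * Y x i
      = gval g x (Z x) (lcCov g Y P x) := by
    have hl : lcCov g Y P x = fun k => ∑ j, Y x j * lcCov g (E j) P x k :=
      funext fun k => lcCov_linear Y P k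
    rw [hl, gval_linear_right]
    exact Finset.sum_congr rfl fun i _ => by ring
  have e2 : ∑ i, gval g x (Y x) (Z x) * lcCov g (E i) P x i
      = gval g x (Y x) (Z x) * ∑ j, lcCov g (E j) P x j := by
    rw [Finset.mul_sum]
  have e3 : ∑ i, (gval g x (Z x) (P x) * gval g x (Y x) (P x)
        - gval g x (Y x) (Z x) * gval g x (P x) (P x)
        - gval g x (Z x) (lcCov g Y P x)) * (Pi.single i 1 : Fin n → ℝ) i
      = (n:ℝ) * (gval g x (Z x) (P x) * gval g x (Y x) (P x)
        - gval g x (Y x) (Z x) * gval g x (P x) (P x)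
        - gval g x (Z x) (lcCov g Y P x)) := by
    calc ∑ i, (gval g x (Z x) (P x) * gval g x (Y x) (P x)
        - gval g x (Y x) (Z x) * gval g x (P x) (P x)
        - gval g x (Z x) (lcCov g Y P x)) * (Pi.single i 1 : Fin n → ℝ) i
        = ∑ _i : Fin n, (gval g x (Z x) (P x) * gval g x (Y x) (P x)
          - gval g x (Y x) (Z x) * gval g x (P x) (P x)
          - gval g x (Z x) (lcCov g Y P x)) :=
          Finset.sum_congr rfl fun i _ => by simp
      _ = _ := by simp [Finset.sum_const, nsmul_eq_mul, mul_comm]; ring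
  have e4 : ∑ i, gval g x (Y x) (Z x) * gval g x (Pi.single i 1) (P x) * P x i
      = gval g x (Y x) (Z x) * gval g x (P x) (P x) := by
    rw [show (gval g x (Y x) (Z x) * gval g x (P x) (P x))
        = gval g x (Y x) (Z x) * ∑ i, P x i * gval g x (Pi.single i 1) (P x) from by
          rw [sumG], Finset.mul_sum]
    exact Finset.sum_congr rfl fun i _ => by ring
  have e5 : ∑ i, gval g x (Z x) (P x) * gval g x (Pi.single i 1) (P x) * Y x i
      = gval g x (Z x) (P x) * gval g x (Y x) (P x) := by
    rw [show (gval g x (Z x) (P x) * gval g x (Y x) (P x))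
        = gval g x (Z x) (P x) * ∑ i, Y x i * gval g x (Pi.single i 1) (P x) from by
          rw [sumG], Finset.mul_sum]
    exact Finset.sum_congr rfl fun i _ => by ring
  have e6 : ∑ i, gval g x (Pi.single i 1) (Z x) * gval g x (P x) (P x) * Y x i
      = gval g x (P x) (P x) * gval g x (Y x) (Z x) := by
    rw [show (gval g x (P x) (P x) * gval g x (Y x) (Z x))
        = gval g x (P x) (P x) * ∑ i, Y x i * gval g x (Pi.single i 1) (Z x) from by
          rw [sumG], Finset.mul_sum]
    exact Finset.sum_congr rfl fun i _ => by ring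
  have e7 : ∑ i, gval g x (Pi.single i 1) (Z x) * gval g x (Y x) (P x) * P x i
      = gval g x (Y x) (P x) * gval g x (P x) (Z x) := by
    rw [show (gval g x (Y x) (P x) * gval g x (P x) (Z x))
        = gval g x (Y x) (P x) * ∑ i, P x i * gval g x (Pi.single i 1) (Z x) from by
          rw [sumG], Finset.mul_sum]
    exact Finset.sum_congr rfl fun i _ => by ring
  have e8 : ∑ i, gval g x (Pi.single i 1) (Z x) * lcCov g Y P x i
      = gval g x (lcCov g Y P x) (Z x) := by
    rw [← sumG (lcCov g Y P x) (Z x)]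
    exact Finset.sum_congr rfl fun i _ => by ring
  rw [e1, e2, e3, e4, e5, e6, e7, e8]
  rw [gval_symm hgpos hx (P x) (Z x), gval_symm hgpos hx (lcCov g Y P x) (Z x)]
  ring

/-- The trace of `∇P` vanishes when `P` is Killing. -/
lemma theta_zero (hU : IsOpen U) (hg : SmoothVF U g)
    (hgpos : ∀ x ∈ U, (Matrix.of (g x)).PosDef) (hP : SmoothVF U P)
    (hKilling : ∀ X Y : VF n, SmoothVF U X → SmoothVF U Y → ∀ x ∈ U,
      gval g x (lcCov g X P x) (Y x) + gval g x (lcCov g Y P x) (X x) = 0)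
    (hx : x ∈ U) :
    ∑ i, lcCov g (E i) P x i = 0 := by
  have hsm : ∀ i : Fin n, SmoothVF U (fun y k => (Matrix.of (g y))⁻¹ k i) :=
    fun i => contDiffOn_pi.mpr fun k => smooth_inv hU hg hgpos k i
  have hk : ∀ i : Fin n,
      gval g x (lcCov g (E i) P x) (fun k => (Matrix.of (g x))⁻¹ k i)
        + gval g x (lcCov g (fun y k => (Matrix.of (g y))⁻¹ k i) P x) (Pi.single i 1) = 0 :=
    fun i => hKilling (E i) (fun y k => (Matrix.of (g y))⁻¹ k i) (smoothE i) (hsm i) x hx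
  have SA : ∀ i : Fin n,
      gval g x (lcCov g (E i) P x) (fun k => (Matrix.of (g x))⁻¹ k i)
        = lcCov g (E i) P x i := by
    intro i
    show (∑ a, ∑ b, g x a b * lcCov g (E i) P x a * (Matrix.of (g x))⁻¹ b i) = _
    have h1 : ∀ a : Fin n, ∑ b, g x a b * lcCov g (E i) P x a * (Matrix.of (g x))⁻¹ b i
        = lcCov g (E i) P x a * (if a = i then 1 else 0) := by
      intro a
      rw [← gmul_inv hgpos hx a i, Finset.mul_sum]
      exact Finset.sum_congr rfl fun b _ => by ring
    simp only [h1, mul_ite, mul_one, mul_zero]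
    simp
  have SB : ∑ i, gval g x (lcCov g (fun y k => (Matrix.of (g y))⁻¹ k i) P x) (Pi.single i 1)
      = ∑ j, lcCov g (E j) P x j := by
    have hBi : ∀ i : Fin n,
        gval g x (lcCov g (fun y k => (Matrix.of (g y))⁻¹ k i) P x) (Pi.single i 1)
          = ∑ b, ∑ m, g x i b * ((Matrix.of (g x))⁻¹ m i * lcCov g (E m) P x b) := by
      intro i
      rw [gval_symm hgpos hx, gval_single_left]
      apply Finset.sum_congr rfl; intro b _
      rw [lcCov_linear (fun y k => (Matrix.of (g y))⁻¹ k i) P b, Finset.mul_sum]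
    simp only [hBi]
    rw [sum3_comm]
    have h2 : ∀ m : Fin n, ∑ b, ∑ i : Fin n, g x i b * ((Matrix.of (g x))⁻¹ m i
          * lcCov g (E m) P x b)
        = ∑ b, lcCov g (E m) P x b * (if b = m then 1 else 0) := by
      intro m
      apply Finset.sum_congr rfl; intro b _
      rw [← gmul_inv hgpos hx b m, Finset.mul_sum]
      apply Finset.sum_congr rfl; intro i _
      rw [gsym hgpos hx i b, inv_symm hgpos hx m i]
      ring
    simp only [h2, mul_ite, mul_one, mul_zero]
    apply Finset.sum_congr rfl; intro m _
    simp
  have htot : (∑ i, (gval g x (lcCov g (E i) P x) (fun k => (Matrix.of (g x))⁻¹ k i)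
      + gval g x (lcCov g (fun y k => (Matrix.of (g y))⁻¹ k i) P x) (Pi.single i 1))) = 0 := by
    rw [Finset.sum_congr rfl fun i (_ : i ∈ Finset.univ) => hk i]
    simp
  rw [Finset.sum_add_distrib, Finset.sum_congr rfl fun i (_ : i ∈ Finset.univ) => SA i, SB]
    at htot
  linarith

end Stmt4

/-- On an open `U ⊆ ℝⁿ` (`n ≥ 3`) with Riemannian metric `g`, Levi-Civita
connection `∇`, vector field `P`, `π(X) = g(X,P)`, semi-symmetric metric connection `∇̄`,
`S = Ric_∇`, `S̄ = Ric_∇̄`, `Ŝ = sym S̄`: suppose `P` is nowhere vanishing, `P` is a Killing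
vector field of `g`, and `(U,g)` is Ricci-flat, i.e. `S = 0`.  Then at every point
`Ŝ(Y,Z) = −(n−2)g(P,P)g(Y,Z) + (n−2)π(Y)π(Z)`, so `(U,∇̄)` is a semi-quasi-Einstein
manifold. -/
theorem statement4 (n : ℕ) (hn : 3 ≤ n)
    (U : Set (Fin n → ℝ)) (hU : IsOpen U)
    (g : (Fin n → ℝ) → Fin n → Fin n → ℝ) (hg : SmoothVF U g)
    (hgpos : ∀ x ∈ U, (Matrix.of (g x)).PosDef)
    (P : VF n) (hP : SmoothVF U P)
    (hPne : ∀ x ∈ U, P x ≠ 0)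
    (hKilling : ∀ X Y : VF n, SmoothVF U X → SmoothVF U Y → ∀ x ∈ U,
      gval g x (lcCov g X P x) (Y x) + gval g x (lcCov g Y P x) (X x) = 0)
    (hRicciFlat : ∀ Y Z : VF n, SmoothVF U Y → SmoothVF U Z → ∀ x ∈ U,
      ricci (lcCov g) Y Z x = 0) :
    (∀ Y Z : VF n, SmoothVF U Y → SmoothVF U Z → ∀ x ∈ U,
      shat g P Y Z x =
        -(((n : ℝ) - 2) * gval g x (P x) (P x)) * gval g x (Y x) (Z x)
          + ((n : ℝ) - 2) * (gval g x (Y x) (P x) * gval g x (Z x) (P x))) ∧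
      ((n : ℝ) - 2 ≠ 0) ∧
      (∀ x ∈ U, ∃ v : Fin n → ℝ, gval g x v (P x) ≠ 0) := by
  refine ⟨?_, ?_, ?_⟩
  · intro Y Z hY hZ x hx
    have h1 := Stmt4.ricci_diff hU hg hgpos hP hY hZ hx
    have h2 := Stmt4.ricci_diff hU hg hgpos hP hZ hY hx
    have hth := Stmt4.theta_zero hU hg hgpos hP hKilling hx
    have hr1 := hRicciFlat Y Z hY hZ x hx
    have hr2 := hRicciFlat Z Y hZ hY x hx
    have hkil := hKilling Y Z hY hZ x hx
    rw [Stmt4.gval_symm hgpos hx (lcCov g Y P x) (Z x),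
      Stmt4.gval_symm hgpos hx (lcCov g Z P x) (Y x)] at hkil
    unfold shat
    rw [h1, h2, hr1, hr2, hth, Stmt4.gval_symm hgpos hx (Z x) (Y x)]
    linear_combination ((2 - (n:ℝ))/2) * hkil
  · have h3 : (3:ℝ) ≤ (n:ℝ) := by exact_mod_cast hn
    intro h; linarith
  · intro x hx
    refine ⟨P x, ?_⟩
    have hpd := (hgpos x hx).dotProduct_mulVec_pos (hPne x hx)
    have heq : gval g x (P x) (P x)
        = dotProduct (star (P x)) (Matrix.mulVec (Matrix.of (g x)) (P x)) := by
      show (∑ a, ∑ b, g x a b * P x a * P x b)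
        = ∑ a, star (P x) a * (Matrix.mulVec (Matrix.of (g x)) (P x)) a
      apply Finset.sum_congr rfl; intro a _
      simp only [Pi.star_apply, star_trivial, Matrix.mulVec, dotProduct,
        Matrix.of_apply]
      rw [Finset.mul_sum]
      exact Finset.sum_congr rfl fun b _ => by ring
    rw [heq]
    exact hpd.ne'
end

section
/- Suppose g(P,P) = 1 everywhere, S(Y,Z) = (n−2)g(Y,Z) − (n−2)π(Y)π(Z) for all vector fields Y, Z, and ∇S ≡ 0. Then P is parallel: ∇_X P = 0 for all vector fields X. -/
open scoped BigOperators

/-! ### Auxiliary lemmas -/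

section Aux
variable {n : ℕ} {U : Set (Fin n → ℝ)} {g : (Fin n → ℝ) → Fin n → Fin n → ℝ}

lemma aux_smooth_entry (hg : SmoothVF U g) (i j : Fin n) :
    ContDiffOn ℝ (⊤ : ℕ∞) (fun x => g x i j) U :=
  (contDiffOn_pi.1 ((contDiffOn_pi.1 hg) i)) j

lemma aux_smooth_comp {m : ℕ} {f : (Fin n → ℝ) → Fin m → ℝ} (hf : SmoothVF U f) (k : Fin m) :
    ContDiffOn ℝ (⊤ : ℕ∞) (fun x => f x k) U := (contDiffOn_pi.1 hf) k

lemma aux_smooth_pd (hU : IsOpen U) {f : (Fin n → ℝ) → ℝ} (hf : ContDiffOn ℝ (⊤ : ℕ∞) f U)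
    (i : Fin n) : ContDiffOn ℝ (⊤ : ℕ∞) (fun x => pd i f x) U :=
  (hf.fderiv_of_isOpen hU (by simp)).clm_apply contDiffOn_const

lemma aux_smooth_det {A : (Fin n → ℝ) → Matrix (Fin n) (Fin n) ℝ}
    (hA : ∀ i j, ContDiffOn ℝ (⊤ : ℕ∞) (fun x => A x i j) U) :
    ContDiffOn ℝ (⊤ : ℕ∞) (fun x => (A x).det) U := by
  simp only [Matrix.det_apply']
  exact ContDiffOn.sum fun σ _ => contDiffOn_const.mul
    (contDiffOn_prod fun i _ => hA (σ i) i)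

lemma aux_smooth_inv_entry (hg : SmoothVF U g)
    (hgpos : ∀ x ∈ U, (Matrix.of (g x)).PosDef) (k l : Fin n) :
    ContDiffOn ℝ (⊤ : ℕ∞) (fun x => (Matrix.of (g x))⁻¹ k l) U := by
  have hof : ∀ i j, ContDiffOn ℝ (⊤ : ℕ∞) (fun x => Matrix.of (g x) i j) U := fun i j =>
    aux_smooth_entry hg i j
  have hdet : ContDiffOn ℝ (⊤ : ℕ∞) (fun x => (Matrix.of (g x)).det) U := aux_smooth_det hof
  have hadj : ContDiffOn ℝ (⊤ : ℕ∞) (fun x => (Matrix.of (g x)).adjugate k l) U := by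
    simp only [Matrix.adjugate_apply]
    apply aux_smooth_det
    intro i j
    simp only [Matrix.updateRow_apply]
    by_cases h : i = l <;> simp [h, Matrix.of_apply]
    · exact contDiffOn_const
    · exact aux_smooth_entry hg i j
  have heq : ∀ x, (Matrix.of (g x))⁻¹ k l
      = ((Matrix.of (g x)).det)⁻¹ * (Matrix.of (g x)).adjugate k l := by
    intro x
    rw [Matrix.inv_def, Matrix.smul_apply, Ring.inverse_eq_inv, smul_eq_mul]
  simp only [heq]
  exact (hdet.inv fun x hx => ne_of_gt (hgpos x hx).det_pos).mul hadj

lemma aux_smooth_christoffel (hU : IsOpen U) (hg : SmoothVF U g)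
    (hgpos : ∀ x ∈ U, (Matrix.of (g x)).PosDef) (k i j : Fin n) :
    ContDiffOn ℝ (⊤ : ℕ∞) (fun x => christoffel g x k i j) U := by
  unfold christoffel
  exact contDiffOn_const.mul (ContDiffOn.sum fun l _ =>
    (aux_smooth_inv_entry hg hgpos k l).mul
      (((aux_smooth_pd hU (aux_smooth_entry hg j l) i).add
        (aux_smooth_pd hU (aux_smooth_entry hg i l) j)).sub
        (aux_smooth_pd hU (aux_smooth_entry hg i j) l)))

lemma aux_smooth_lcCov (hU : IsOpen U) (hg : SmoothVF U g)
    (hgpos : ∀ x ∈ U, (Matrix.of (g x)).PosDef) {X Y : VF n}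
    (hX : SmoothVF U X) (hY : SmoothVF U Y) : SmoothVF U (lcCov g X Y) := by
  rw [SmoothVF, contDiffOn_pi]
  intro k
  simp only [lcCov]
  apply ContDiffOn.add
  · exact ((aux_smooth_comp hY k).fderiv_of_isOpen hU (by simp)).clm_apply hX
  · exact ContDiffOn.sum fun i _ => ContDiffOn.sum fun j _ =>
      ((aux_smooth_christoffel hU hg hgpos k i j).mul (aux_smooth_comp hX i)).mul
        (aux_smooth_comp hY j)

lemma aux_gsymm (hgpos : ∀ x ∈ U, (Matrix.of (g x)).PosDef) {x : Fin n → ℝ} (hx : x ∈ U)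
    (a b : Fin n) : g x a b = g x b a := by
  have h := (hgpos x hx).1
  have h2 := congrFun (congrFun h a) b
  simpa [Matrix.conjTranspose_apply] using h2.symm

lemma aux_lowered (hgpos : ∀ x ∈ U, (Matrix.of (g x)).PosDef) {x : Fin n → ℝ} (hx : x ∈ U)
    (l i j : Fin n) :
    ∑ k, g x k l * christoffel g x k i j
      = (1 / 2) * (pd i (fun y => g y j l) x + pd j (fun y => g y i l) x
          - pd l (fun y => g y i j) x) := by
  have hinv : Matrix.of (g x) * (Matrix.of (g x))⁻¹ = 1 :=
    Matrix.mul_nonsing_inv _ (isUnit_iff_ne_zero.2 (ne_of_gt (hgpos x hx).det_pos))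
  have hone : ∀ m, ∑ k, g x l k * (Matrix.of (g x))⁻¹ k m
      = (1 : Matrix (Fin n) (Fin n) ℝ) l m := by
    intro m; rw [← hinv, Matrix.mul_apply]; rfl
  calc ∑ k, g x k l * christoffel g x k i j
      = ∑ k, ∑ m, (1 / 2) * ((g x l k * (Matrix.of (g x))⁻¹ k m) *
          (pd i (fun y => g y j m) x + pd j (fun y => g y i m) x
            - pd m (fun y => g y i j) x)) := by
        refine Finset.sum_congr rfl fun k _ => ?_
        rw [christoffel, aux_gsymm hgpos hx k l]
        simp only [Finset.mul_sum]
        exact Finset.sum_congr rfl fun m _ => by ring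
    _ = ∑ m, ∑ k, (1 / 2) * ((g x l k * (Matrix.of (g x))⁻¹ k m) *
          (pd i (fun y => g y j m) x + pd j (fun y => g y i m) x
            - pd m (fun y => g y i j) x)) := Finset.sum_comm
    _ = ∑ m, (1 / 2) * (((1 : Matrix (Fin n) (Fin n) ℝ) l m) *
          (pd i (fun y => g y j m) x + pd j (fun y => g y i m) x
            - pd m (fun y => g y i j) x)) := by
        refine Finset.sum_congr rfl fun m _ => ?_
        rw [← hone m, Finset.sum_mul, Finset.mul_sum]
    _ = (1 / 2) * (pd i (fun y => g y j l) x + pd j (fun y => g y i l) x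
          - pd l (fun y => g y i j) x) := by
        simp [Matrix.one_apply, ite_mul, mul_ite, Finset.sum_ite_eq]

lemma aux_clm_expand (f : (Fin n → ℝ) →L[ℝ] ℝ) (v : Fin n → ℝ) :
    f v = ∑ m, v m * f (Pi.single m 1) := by
  have hv : v = ∑ m, v m • (Pi.single m 1 : Fin n → ℝ) :=
    (Finset.univ_sum_single v).symm.trans (Finset.sum_congr rfl fun m _ => by
      rw [← Pi.single_smul, smul_eq_mul, mul_one])
  conv_lhs => rw [hv]
  rw [map_sum]
  exact Finset.sum_congr rfl fun m _ => by rw [map_smul, smul_eq_mul]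

lemma aux_sum3_perm {f g : Fin n → Fin n → Fin n → ℝ}
    (e : (Fin n × Fin n × Fin n) ≃ (Fin n × Fin n × Fin n))
    (h : ∀ a b c, f a b c = g (e (a, b, c)).1 (e (a, b, c)).2.1 (e (a, b, c)).2.2) :
    ∑ a, ∑ b, ∑ c, f a b c = ∑ a, ∑ b, ∑ c, g a b c := by
  have key : ∀ (F : Fin n × Fin n × Fin n → ℝ),
      ∑ p, F p = ∑ a, ∑ b, ∑ c, F (a, b, c) := by
    intro F
    rw [Fintype.sum_prod_type (f := F)]
    exact Finset.sum_congr rfl fun a _ => Fintype.sum_prod_type (f := fun p => F (a, p))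
  rw [← key fun p => f p.1 p.2.1 p.2.2, ← key fun p => g p.1 p.2.1 p.2.2]
  exact Fintype.sum_equiv e _ _ fun p => h p.1 p.2.1 p.2.2

/-- Metric compatibility of the Levi-Civita connection, in the special case needed:
the directional derivative of `g(P,P)` equals `2 g(∇_v P, P)`. -/
lemma aux_compat (hU : IsOpen U) (hg : SmoothVF U g)
    (hgpos : ∀ x ∈ U, (Matrix.of (g x)).PosDef)
    {P : VF n} (hP : SmoothVF U P) {x : Fin n → ℝ} (hx : x ∈ U) (v : Fin n → ℝ) :
    fderiv ℝ (fun y => ∑ i, ∑ j, g y i j * P y i * P y j) x v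
      = 2 * ∑ k, ∑ l, g x k l *
          (fderiv ℝ (fun y => P y k) x v + ∑ i, ∑ j, christoffel g x k i j * v i * P x j)
          * P x l := by
  have hdg : ∀ i j, HasFDerivAt (fun y => g y i j) (fderiv ℝ (fun y => g y i j) x) x :=
    fun i j => (((aux_smooth_entry hg i j).contDiffAt (hU.mem_nhds hx)).differentiableAt
      (by simp)).hasFDerivAt
  have hdP : ∀ k, HasFDerivAt (fun y => P y k) (fderiv ℝ (fun y => P y k) x) x :=
    fun k => (((contDiffOn_pi.1 hP k).contDiffAt (hU.mem_nhds hx)).differentiableAt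
      (by simp)).hasFDerivAt
  have hF : HasFDerivAt (fun y => ∑ i, ∑ j, g y i j * P y i * P y j)
      (∑ i, ∑ j, ((g x i j * P x i) • fderiv ℝ (fun y => P y j) x
        + P x j • (g x i j • fderiv ℝ (fun y => P y i) x
          + P x i • fderiv ℝ (fun y => g y i j) x))) x := by
    apply HasFDerivAt.fun_sum; intro i _; apply HasFDerivAt.fun_sum; intro j _
    exact ((hdg i j).mul (hdP i)).mul (hdP j)
  rw [hF.fderiv]
  simp only [ContinuousLinearMap.coe_sum', Finset.sum_apply, ContinuousLinearMap.add_apply,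
    ContinuousLinearMap.coe_smul', Pi.smul_apply, smul_eq_mul]
  have hdgv : ∀ i j, fderiv ℝ (fun y => g y i j) x v
      = ∑ m, v m * pd m (fun y => g y i j) x := fun i j => aux_clm_expand _ v
  simp only [hdgv]
  have e1 : ∑ i, ∑ j, (g x i j * P x i * (fderiv ℝ (fun y => P y j) x) v +
        P x j * (g x i j * (fderiv ℝ (fun y => P y i) x) v +
          P x i * ∑ m, v m * pd m (fun y => g y i j) x))
      = ((∑ i, ∑ j, g x i j * P x i * (fderiv ℝ (fun y => P y j) x) v)
          + ∑ i, ∑ j, g x i j * (fderiv ℝ (fun y => P y i) x) v * P x j)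
        + ∑ i, ∑ j, P x j * P x i * ∑ m, v m * pd m (fun y => g y i j) x := by
    simp only [← Finset.sum_add_distrib]
    exact Finset.sum_congr rfl fun i _ => Finset.sum_congr rfl fun j _ => by ring
  rw [e1]
  have e2 : ∑ k, ∑ l, g x k l *
        ((fderiv ℝ (fun y => P y k) x) v + ∑ i, ∑ j, christoffel g x k i j * v i * P x j)
        * P x l
      = (∑ k, ∑ l, g x k l * (fderiv ℝ (fun y => P y k) x) v * P x l)
        + ∑ k, ∑ l, g x k l * (∑ i, ∑ j, christoffel g x k i j * v i * P x j) * P x l := by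
    simp only [← Finset.sum_add_distrib]
    exact Finset.sum_congr rfl fun k _ => Finset.sum_congr rfl fun l _ => by ring
  rw [e2, mul_add]
  have hS1 : (∑ i, ∑ j, g x i j * P x i * (fderiv ℝ (fun y => P y j) x) v)
      = ∑ k, ∑ l, g x k l * (fderiv ℝ (fun y => P y k) x) v * P x l := by
    rw [Finset.sum_comm]
    exact Finset.sum_congr rfl fun k _ => Finset.sum_congr rfl fun l _ => by
      rw [aux_gsymm hgpos hx l k]; ring
  rw [hS1]
  have hS3 : (∑ i, ∑ j, P x j * P x i * ∑ m, v m * pd m (fun y => g y i j) x)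
      = 2 * ∑ k, ∑ l, g x k l * (∑ i, ∑ j, christoffel g x k i j * v i * P x j) * P x l := by
    have r1 : (2 : ℝ) * ∑ k, ∑ l, g x k l *
          (∑ i, ∑ j, christoffel g x k i j * v i * P x j) * P x l
        = ∑ l, ∑ k, ∑ i, (∑ j, (g x k l * christoffel g x k i j)
            * (2 * v i * P x j * P x l)) := by
      rw [Finset.mul_sum, Finset.sum_comm]
      refine Finset.sum_congr rfl fun l _ => ?_
      rw [Finset.mul_sum]
      refine Finset.sum_congr rfl fun k _ => ?_
      simp only [Finset.sum_mul, Finset.mul_sum]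
      exact Finset.sum_congr rfl fun i _ => Finset.sum_congr rfl fun j _ => by ring
    have r2 : ∀ l : Fin n, (∑ k, ∑ i, ∑ j, (g x k l * christoffel g x k i j)
          * (2 * v i * P x j * P x l))
        = ∑ i, ∑ j, (∑ k, g x k l * christoffel g x k i j) * (2 * v i * P x j * P x l) := by
      intro l
      rw [Finset.sum_comm]
      refine Finset.sum_congr rfl fun i _ => ?_
      rw [Finset.sum_comm]
      refine Finset.sum_congr rfl fun j _ => ?_
      rw [Finset.sum_mul]
    have r3 : (2 : ℝ) * ∑ k, ∑ l, g x k l *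
          (∑ i, ∑ j, christoffel g x k i j * v i * P x j) * P x l
        = ∑ l, ∑ i, ∑ j,
            (pd i (fun y => g y j l) x * (v i * P x j * P x l)
              + (pd j (fun y => g y i l) x * (v i * P x j * P x l)
                - pd l (fun y => g y i j) x * (v i * P x j * P x l))) := by
      rw [r1]
      refine Finset.sum_congr rfl fun l _ => ?_
      rw [r2 l]
      refine Finset.sum_congr rfl fun i _ => Finset.sum_congr rfl fun j _ => ?_
      rw [aux_lowered hgpos hx l i j]
      ring
    rw [r3]
    simp only [Finset.sum_add_distrib, Finset.sum_sub_distrib]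
    have hcancel : (∑ l, ∑ i, ∑ j, pd j (fun y => g y i l) x * (v i * P x j * P x l))
        = ∑ l, ∑ i, ∑ j, pd l (fun y => g y i j) x * (v i * P x j * P x l) := by
      refine aux_sum3_perm (f := fun a b c => pd c (fun y => g y b a) x * (v b * P x c * P x a))
        (g := fun a b c => pd a (fun y => g y b c) x * (v b * P x c * P x a))
        ⟨fun p => (p.2.2, p.2.1, p.1), fun p => (p.2.2, p.2.1, p.1),
          fun p => rfl, fun p => rfl⟩
        (fun a b c => by simp only [Equiv.coe_fn_mk]; ring)
    rw [hcancel]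
    have hmain : (∑ i, ∑ j, P x j * P x i * ∑ m, v m * pd m (fun y => g y i j) x)
        = ∑ l, ∑ i, ∑ j, pd i (fun y => g y j l) x * (v i * P x j * P x l) := by
      have expand : (∑ i, ∑ j, P x j * P x i * ∑ m, v m * pd m (fun y => g y i j) x)
          = ∑ i, ∑ j, ∑ m, (P x j * P x i) * (v m * pd m (fun y => g y i j) x) := by
        refine Finset.sum_congr rfl fun i _ => Finset.sum_congr rfl fun j _ => ?_
        rw [Finset.mul_sum]
      rw [expand]
      refine aux_sum3_perm
        (f := fun a b c => (P x b * P x a) * (v c * pd c (fun y => g y a b) x))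
        (g := fun a b c => pd b (fun y => g y c a) x * (v b * P x c * P x a))
        ⟨fun p => (p.2.1, p.2.2, p.1), fun p => (p.2.2, p.1, p.2.1),
          fun p => rfl, fun p => rfl⟩
        (fun a b c => by simp only [Equiv.coe_fn_mk]; ring)
    rw [hmain]
    ring
  rw [hS3]
  ring

end Aux

/-- On an open `U ⊆ ℝⁿ` (`n ≥ 3`) with Riemannian metric `g`, Levi-Civita
connection `∇`, vector field `P`, `π(X) = g(X,P)`: suppose `g(P,P) = 1` everywhere,
`S(Y,Z) = (n−2)g(Y,Z) − (n−2)π(Y)π(Z)` for all vector fields `Y, Z` (where `S = Ric_∇`),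
and `∇S ≡ 0`.  Then `P` is parallel: `∇_X P = 0` for all vector fields `X`. -/
theorem statement9 (n : ℕ) (hn : 3 ≤ n)
    (U : Set (Fin n → ℝ)) (hU : IsOpen U)
    (g : (Fin n → ℝ) → Fin n → Fin n → ℝ) (hg : SmoothVF U g)
    (hgpos : ∀ x ∈ U, (Matrix.of (g x)).PosDef)
    (P : VF n) (hP : SmoothVF U P)
    (hPunit : ∀ x ∈ U, gval g x (P x) (P x) = 1)
    (hS : ∀ Y Z : VF n, SmoothVF U Y → SmoothVF U Z → ∀ x ∈ U,
      ricci (lcCov g) Y Z x =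
        ((n : ℝ) - 2) * gval g x (Y x) (Z x)
          - ((n : ℝ) - 2) * (gval g x (Y x) (P x) * gval g x (Z x) (P x)))
    (hdS : ∀ X Y Z : VF n, SmoothVF U X → SmoothVF U Y → SmoothVF U Z → ∀ x ∈ U,
      covT (lcCov g) (ricci (lcCov g)) X Y Z x = 0) :
    ∀ X : VF n, SmoothVF U X → ∀ x ∈ U, lcCov g X P x = 0 := by
  intro X hX x hx
  have hQ : SmoothVF U (lcCov g X P) := aux_smooth_lcCov hU hg hgpos hX hP
  -- Step 1: `g(∇_X P, P) = 0` at `x`, via metric compatibility and `g(P,P) ≡ 1`.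
  have honev : fderiv ℝ (fun y => ∑ i, ∑ j, g y i j * P y i * P y j) x (X x) = 0 := by
    have heq : (fun y => ∑ i, ∑ j, g y i j * P y i * P y j) =ᶠ[nhds x]
        (fun _ => (1 : ℝ)) := by
      filter_upwards [hU.mem_nhds hx] with y hy
      exact hPunit y hy
    rw [heq.fderiv_eq]
    simp
  have hcomp := aux_compat hU hg hgpos hP hx (X x)
  have h2c : fderiv ℝ (fun y => ∑ i, ∑ j, g y i j * P y i * P y j) x (X x)
      = 2 * gval g x (lcCov g X P x) (P x) := by
    rw [hcomp]; rfl
  have hc : gval g x (lcCov g X P x) (P x) = 0 := by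
    rw [honev] at h2c; linarith
  -- Step 2: `g(∇_X P, ∇_X P) = 0` at `x`, from `∇S = 0` applied to `Y := const (∇_X P x)`.
  have hY : SmoothVF U (fun _ => lcCov g X P x : VF n) := contDiffOn_const
  have hW : SmoothVF U (lcCov g X (fun _ => lcCov g X P x)) :=
    aux_smooth_lcCov hU hg hgpos hX hY
  have t1 : fderiv ℝ (ricci (lcCov g) (fun _ => lcCov g X P x) P) x (X x) = 0 := by
    have heq : (ricci (lcCov g) (fun _ => lcCov g X P x) P) =ᶠ[nhds x]
        (fun _ => (0 : ℝ)) := by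
      filter_upwards [hU.mem_nhds hx] with y hy
      rw [hS (fun _ => lcCov g X P x) P hY hP y hy, hPunit y hy]
      ring
    rw [heq.fderiv_eq]
    simp
  have t2 : ricci (lcCov g) (lcCov g X (fun _ => lcCov g X P x)) P x = 0 := by
    rw [hS _ P hW hP x hx, hPunit x hx]
    ring
  have key := hdS X (fun _ => lcCov g X P x) P hX hY hP x hx
  rw [covT, t1, t2] at key
  have t3 : ricci (lcCov g) (fun _ => lcCov g X P x) (lcCov g X P) x
      = ((n : ℝ) - 2) * gval g x (lcCov g X P x) (lcCov g X P x)
        - ((n : ℝ) - 2) * (gval g x (lcCov g X P x) (P x)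
            * gval g x (lcCov g X P x) (P x)) :=
    hS (fun _ => lcCov g X P x) (lcCov g X P) hY hQ x hx
  have hn2 : ((n : ℝ) - 2) ≠ 0 := by
    have h3 : (3 : ℝ) ≤ (n : ℝ) := by exact_mod_cast hn
    linarith
  have hQQ : gval g x (lcCov g X P x) (lcCov g X P x) = 0 := by
    have hz : ricci (lcCov g) (fun _ => lcCov g X P x) (lcCov g X P) x = 0 := by
      linarith
    rw [t3, hc] at hz
    have := mul_eq_zero.1 (by linarith : ((n : ℝ) - 2)
      * gval g x (lcCov g X P x) (lcCov g X P x) = 0)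
    tauto
  -- Step 3: positive definiteness forces `∇_X P = 0` at `x`.
  by_contra h0
  have hpos := (hgpos x hx).dotProduct_mulVec_pos h0
  have hdot : dotProduct (star (lcCov g X P x))
      (Matrix.mulVec (Matrix.of (g x)) (lcCov g X P x))
      = gval g x (lcCov g X P x) (lcCov g X P x) := by
    simp only [star_trivial, dotProduct, Matrix.mulVec, Matrix.of_apply, gval,
      Finset.mul_sum]
    exact Finset.sum_congr rfl fun i _ => Finset.sum_congr rfl fun j _ => by ring
  rw [hdot, hQQ] at hpos
  exact lt_irrefl _ hpos
end

section
/- For all X, Y, Z, W ∈ V: −(R̄(X,Y)·S̄)(Z,W) = −(R(X,Y)·S)(Z,W) + Q(g,S̄)(Z,W;X,Y) + [S(X,Z) − (n−2)g(X,Z)]·π(Y)π(W) − [S(Y,Z) − (n−2)g(Y,Z)]·π(X)π(W) + [S(X,W) − (n−2)g(X,W)]·π(Y)π(Z) − [S(Y,W) − (n−2)g(Y,W)]·π(X)π(Z). -/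
open scoped RealInnerProductSpace

/-! The endomorphism `A = ½ id − P ⊗ π` is self-adjoint, so `R̄(X,Y) − R(X,Y)` is
`−(A ∘ (X ∧ Y) + (X ∧ Y) ∘ A) = −(X ∧ Y) + π(·) (X ∧ Y)P + π((X ∧ Y)·) P` (`correction`).
The term `−(X ∧ Y)` produces `Q(g, S̄)`. Since `S̄(P, ·) = 0` the last term contributes nothing,
and `S̄((X ∧ Y)P, W) = π(Y) S̄(X, W) − π(X) S̄(Y, W)` gives the four `π π`-terms.
Finally `R(X,Y)` is skew and kills `P`, so it annihilates both `g` and `π ⊗ π`, whence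
`R(X,Y)·S̄ = R(X,Y)·S`. -/

namespace CurvatureDeformation

variable {V : Type*} [NormedAddCommGroup V] [InnerProductSpace ℝ V]

def wedge (X Y Z : V) : V := ⟪Y, Z⟫ • X - ⟪X, Z⟫ • Y

def correction (P X Y U : V) : V := -wedge X Y U + ⟪U, P⟫ • wedge X Y P + ⟪wedge X Y U, P⟫ • P

def shiftedForm (S : LinearMap.BilinForm ℝ V) (c : ℝ) (P : V) : LinearMap.BilinForm ℝ V :=
  LinearMap.mk₂ ℝ (fun Y Z => S Y Z + c * (⟪Y, P⟫ * ⟪Z, P⟫) - c * ⟪Y, Z⟫)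
    (fun Y₁ Y₂ Z => by simp only [map_add, LinearMap.add_apply, inner_add_left]; ring)
    (fun a Y Z => by
      simp only [map_smul, LinearMap.smul_apply, smul_eq_mul, real_inner_smul_left]; ring)
    (fun Y Z₁ Z₂ => by simp only [map_add, inner_add_left, inner_add_right]; ring)
    (fun a Y Z => by
      simp only [map_smul, smul_eq_mul, real_inner_smul_left, real_inner_smul_right]; ring)

section shiftedForm

variable {S : LinearMap.BilinForm ℝ V} {c : ℝ} {P : V}

@[simp]
theorem shiftedForm_apply (Y Z : V) :
    shiftedForm S c P Y Z = S Y Z + c * (⟪Y, P⟫ * ⟪Z, P⟫) - c * ⟪Y, Z⟫ :=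
  rfl

theorem shiftedForm_comm (hS : ∀ Y Z, S Y Z = S Z Y) (Y Z : V) :
    shiftedForm S c P Y Z = shiftedForm S c P Z Y := by
  simp only [shiftedForm_apply, hS Y Z, real_inner_comm Y Z]
  ring

theorem shiftedForm_self_left (hP : ⟪P, P⟫ = 1) (hSP : ∀ Y, S P Y = 0) (Z : V) :
    shiftedForm S c P P Z = 0 := by
  simp only [shiftedForm_apply, hSP, hP, real_inner_comm P Z]
  ring

theorem shiftedForm_wedge_left (X Y W : V) :
    shiftedForm S c P (wedge X Y P) W =
      (S X W - c * ⟪X, W⟫) * ⟪Y, P⟫ - (S Y W - c * ⟪Y, W⟫) * ⟪X, P⟫ := by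
  simp only [shiftedForm_apply, wedge, map_sub, map_smul, LinearMap.sub_apply,
    LinearMap.smul_apply, smul_eq_mul, real_inner_comm P]
  ring

theorem shiftedForm_skew (F : V → V) (hskew : ∀ Z W, ⟪F Z, W⟫ = -⟪F W, Z⟫)
    (hFP : ∀ Z, ⟪F Z, P⟫ = 0) (Z W : V) :
    shiftedForm S c P (F Z) W + shiftedForm S c P Z (F W) = S (F Z) W + S Z (F W) := by
  simp only [shiftedForm_apply, hFP, hskew Z W, real_inner_comm Z (F W)]
  ring

theorem shiftedForm_correction (hP : ⟪P, P⟫ = 1) (hS : ∀ Y Z, S Y Z = S Z Y)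
    (hSP : ∀ Y, S Y P = 0) (X Y Z W : V) :
    shiftedForm S c P (correction P X Y Z) W + shiftedForm S c P Z (correction P X Y W) =
      -shiftedForm S c P (wedge X Y Z) W - shiftedForm S c P Z (wedge X Y W)
        + (S X Z - c * ⟪X, Z⟫) * (⟪Y, P⟫ * ⟪W, P⟫) - (S Y Z - c * ⟪Y, Z⟫) * (⟪X, P⟫ * ⟪W, P⟫)
        + (S X W - c * ⟪X, W⟫) * (⟪Y, P⟫ * ⟪Z, P⟫) - (S Y W - c * ⟪Y, W⟫) * (⟪X, P⟫ * ⟪Z, P⟫) := by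
  have hPY : ∀ Y, shiftedForm S c P P Y = 0 :=
    shiftedForm_self_left hP fun Y => (hS P Y).trans (hSP Y)
  simp only [correction, map_add, map_neg, map_smul, LinearMap.add_apply, LinearMap.neg_apply,
    LinearMap.smul_apply, smul_eq_mul, hPY, shiftedForm_comm hS Z, shiftedForm_wedge_left]
  ring

end shiftedForm

theorem correction_eq {P : V} {A : V → V} (hA : ∀ X, A X = -⟪X, P⟫ • P + (2⁻¹ : ℝ) • X)
    (X Y Z : V) :
    correction P X Y Z = ⟪A X, Z⟫ • Y - ⟪A Y, Z⟫ • X + ⟪X, Z⟫ • A Y - ⟪Y, Z⟫ • A X := by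
  simp only [hA, correction, wedge, inner_add_left, inner_sub_right, real_inner_smul_left,
    real_inner_smul_right, real_inner_comm P]
  module

end CurvatureDeformation

open CurvatureDeformation

theorem statement13_general {V : Type*} [NormedAddCommGroup V] [InnerProductSpace ℝ V]
    (n : ℕ)
    (P : V) (hP : ⟪P, P⟫ = 1)
    (A : V → V) (hA : ∀ X : V, A X = -(⟪X, P⟫) • P + (2⁻¹ : ℝ) • X)
    (R : V →ₗ[ℝ] V →ₗ[ℝ] V →ₗ[ℝ] V)
    (hR2 : ∀ X Y Z W : V, ⟪R X Y Z, W⟫ = -⟪R X Y W, Z⟫)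
    (hRP : ∀ X Y : V, R X Y P = 0)
    (S : V →ₗ[ℝ] V →ₗ[ℝ] ℝ) (hSsymm : ∀ X Y : V, S X Y = S Y X)
    (hSP : ∀ X : V, S X P = 0)
    (Sbar : V → V → ℝ)
    (hSbar : ∀ Y Z : V, Sbar Y Z =
      S Y Z + ((n : ℝ) - 2) * (⟪Y, P⟫ * ⟪Z, P⟫) - ((n : ℝ) - 2) * ⟪Y, Z⟫)
    (Rbar : V → V → V → V)
    (hRbar : ∀ X Y Z : V, Rbar X Y Z =
      R X Y Z + ⟪A X, Z⟫ • Y - ⟪A Y, Z⟫ • X + ⟪X, Z⟫ • A Y - ⟪Y, Z⟫ • A X) :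
    ∀ X Y Z W : V,
      -(-(Sbar (Rbar X Y Z) W) - Sbar Z (Rbar X Y W)) =
        -(-(S (R X Y Z) W) - S Z (R X Y W))
          + (-(Sbar (⟪Y, Z⟫ • X - ⟪X, Z⟫ • Y) W) - Sbar Z (⟪Y, W⟫ • X - ⟪X, W⟫ • Y))
          + (S X Z - ((n : ℝ) - 2) * ⟪X, Z⟫) * (⟪Y, P⟫ * ⟪W, P⟫)
          - (S Y Z - ((n : ℝ) - 2) * ⟪Y, Z⟫) * (⟪X, P⟫ * ⟪W, P⟫)
          + (S X W - ((n : ℝ) - 2) * ⟪X, W⟫) * (⟪Y, P⟫ * ⟪Z, P⟫)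
          - (S Y W - ((n : ℝ) - 2) * ⟪Y, W⟫) * (⟪X, P⟫ * ⟪Z, P⟫) := by
  intro X Y Z W
  obtain rfl : Sbar = fun Y Z => shiftedForm S ((n : ℝ) - 2) P Y Z := funext₂ hSbar
  have hRP' : ∀ U, ⟪R X Y U, P⟫ = 0 := fun U => by rw [hR2, hRP, inner_zero_left, neg_zero]
  have hRbar' : ∀ U, Rbar X Y U = R X Y U + correction P X Y U := fun U => by
    rw [hRbar, correction_eq hA]
    abel
  have hskew := shiftedForm_skew (S := S) (c := (n : ℝ) - 2) (R X Y) (hR2 X Y) hRP' Z W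
  have hcorr := shiftedForm_correction (c := (n : ℝ) - 2) hP hSsymm hSP X Y Z W
  simp only [hRbar', map_add, LinearMap.add_apply]
  unfold wedge at hcorr
  linarith

/-- In the algebraic setting of an inner product space `V` of dimension `n ≥ 3`,
with unit vector `P`, `π(X) = g(X,P)`, `AX = −π(X)P + ½X`, a curvature-like trilinear map `R`
with `R(X,Y)P = 0`, a symmetric bilinear form `S` with `S(X,P) = 0`,
`S̄(Y,Z) = S(Y,Z) + (n−2)π(Y)π(Z) − (n−2)g(Y,Z)` and
`R̄(X,Y)Z = R(X,Y)Z + g(AX,Z)Y − g(AY,Z)X + g(X,Z)AY − g(Y,Z)AX`, one has for all `X,Y,Z,W`: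
`−(R̄(X,Y)·S̄)(Z,W) = −(R(X,Y)·S)(Z,W) + Q(g,S̄)(Z,W;X,Y)
  + [S(X,Z) − (n−2)g(X,Z)]π(Y)π(W) − [S(Y,Z) − (n−2)g(Y,Z)]π(X)π(W)
  + [S(X,W) − (n−2)g(X,W)]π(Y)π(Z) − [S(Y,W) − (n−2)g(Y,W)]π(X)π(Z)`. -/
theorem statement13 {V : Type*} [NormedAddCommGroup V] [InnerProductSpace ℝ V]
    [FiniteDimensional ℝ V] (n : ℕ) (hn : n = Module.finrank ℝ V) (h3 : 3 ≤ n)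
    (P : V) (hP : ⟪P, P⟫ = 1)
    (A : V → V) (hA : ∀ X : V, A X = -(⟪X, P⟫) • P + (2⁻¹ : ℝ) • X)
    (R : V →ₗ[ℝ] V →ₗ[ℝ] V →ₗ[ℝ] V)
    (hR1 : ∀ X Y Z W : V, ⟪R X Y Z, W⟫ = -⟪R Y X Z, W⟫)
    (hR2 : ∀ X Y Z W : V, ⟪R X Y Z, W⟫ = -⟪R X Y W, Z⟫)
    (hR3 : ∀ X Y Z W : V, ⟪R X Y Z, W⟫ = ⟪R Z W X, Y⟫)
    (hRP : ∀ X Y : V, R X Y P = 0)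
    (S : V →ₗ[ℝ] V →ₗ[ℝ] ℝ) (hSsymm : ∀ X Y : V, S X Y = S Y X)
    (hSP : ∀ X : V, S X P = 0)
    (Sbar : V → V → ℝ)
    (hSbar : ∀ Y Z : V, Sbar Y Z =
      S Y Z + ((n : ℝ) - 2) * (⟪Y, P⟫ * ⟪Z, P⟫) - ((n : ℝ) - 2) * ⟪Y, Z⟫)
    (Rbar : V → V → V → V)
    (hRbar : ∀ X Y Z : V, Rbar X Y Z =
      R X Y Z + ⟪A X, Z⟫ • Y - ⟪A Y, Z⟫ • X + ⟪X, Z⟫ • A Y - ⟪Y, Z⟫ • A X) :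
    ∀ X Y Z W : V,
      -(-(Sbar (Rbar X Y Z) W) - Sbar Z (Rbar X Y W)) =
        -(-(S (R X Y Z) W) - S Z (R X Y W))
          + (-(Sbar (⟪Y, Z⟫ • X - ⟪X, Z⟫ • Y) W) - Sbar Z (⟪Y, W⟫ • X - ⟪X, W⟫ • Y))
          + (S X Z - ((n : ℝ) - 2) * ⟪X, Z⟫) * (⟪Y, P⟫ * ⟪W, P⟫)
          - (S Y Z - ((n : ℝ) - 2) * ⟪Y, Z⟫) * (⟪X, P⟫ * ⟪W, P⟫)
          + (S X W - ((n : ℝ) - 2) * ⟪X, W⟫) * (⟪Y, P⟫ * ⟪Z, P⟫)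
          - (S Y W - ((n : ℝ) - 2) * ⟪Y, W⟫) * (⟪X, P⟫ * ⟪Z, P⟫) :=
  statement13_general n P hP A hA R hR2 hRP S hSsymm hSP Sbar hSbar Rbar hRbar
end
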